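/- arXiv:2005.09709 — 9 statements merged into one kernel-verified Lean document; each statement's English description precedes it below -/
import Mathlib

section
/- Let A and B be closed subsets of a complete metric space (X,d) and let x̄ ∈ X. Suppose A and B have property (T) at x̄ with constants δ > 0 and M > 0. Let x^A ∈ A with d(x^A, x̄) ≤ δ/(1+2M) and x^B ∈ B with d(x^B, x̄) ≤ δ/(1+2M). Then there exists a point x^{AB} ∈ A ∩ B such that d(x^{AB}, x^A) ≤ M·d(x^A, x^B) and d(x^{AB}, x^B) ≤ M·d(x^A, x^B). -/
open Metric Set

/-- Property (T) of closed sets `A`, `B` at a point `x0` with constants `δ > 0`, `M > 0`. -/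
def PropT {X : Type*} [MetricSpace X] (A B : Set X) (x0 : X) (δ M : ℝ) : Prop :=
  (A ∩ Metric.ball x0 (δ / (2 * (1 + 2 * M)))).Nonempty ∧
  (B ∩ Metric.ball x0 (δ / (2 * (1 + 2 * M)))).Nonempty ∧
  ∀ xA ∈ A ∩ Metric.closedBall x0 δ, ∀ xB ∈ B ∩ Metric.closedBall x0 δ, xA ≠ xB →
    ∃ θ > 0, ∃ xA' ∈ A, ∃ xB' ∈ B,
      dist xA xA' ≤ θ * M ∧ dist xB xB' ≤ θ * M ∧ dist xA' xB' ≤ dist xA xB - θ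

/-- An Ekeland-type variational principle, tailored to our needs. -/
theorem evp_aux {Y : Type*} [MetricSpace Y] [CompleteSpace Y] {S : Set Y} (hS : IsClosed S)
    {g : Y → ℝ} (hg : Continuous g) (hg0 : ∀ y, 0 ≤ g y) {M : ℝ} (hM : 0 < M)
    {x0 : Y} (hx0 : x0 ∈ S) :
    ∃ x ∈ S, dist x x0 ≤ M * (g x0 - g x) ∧
      ∀ y ∈ S, M * g y + dist y x ≤ M * g x → y = x := by
  classical
  set F : Y → Set Y := fun x => {y | y ∈ S ∧ M * g y + dist y x ≤ M * g x} with hF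
  have hself : ∀ x ∈ S, x ∈ F x := by
    intro x hx
    refine ⟨hx, ?_⟩
    simp
  have hbdd : ∀ x, BddBelow (g '' F x) := by
    intro x
    refine ⟨0, ?_⟩
    rintro t ⟨y, -, rfl⟩
    exact hg0 y
  have hstep : ∀ x ∈ S, ∃ y, y ∈ F x ∧ 2 * g y ≤ g x + sInf (g '' F x) := by
    intro x hx
    set m := sInf (g '' F x) with hm
    have hne : (g '' F x).Nonempty := ⟨g x, x, hself x hx, rfl⟩
    have hmx : m ≤ g x := csInf_le (hbdd x) ⟨x, hself x hx, rfl⟩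
    rcases le_or_gt (g x) m with h | h
    · exact ⟨x, hself x hx, by linarith⟩
    · have hlt : m < (g x + m) / 2 := by linarith
      obtain ⟨t, ⟨y, hyF, rfl⟩, hty⟩ := (csInf_lt_iff (hbdd x) hne).mp hlt
      exact ⟨y, hyF, by linarith⟩
  let step : {y // y ∈ S} → {y // y ∈ S} := fun p =>
    ⟨Classical.choose (hstep p.1 p.2), (Classical.choose_spec (hstep p.1 p.2)).1.1⟩
  let u : ℕ → {y // y ∈ S} := fun n => step^[n] ⟨x0, hx0⟩
  have husucc : ∀ n, u (n + 1) = step (u n) := fun n => Function.iterate_succ_apply' step n _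
  have hmem : ∀ n, (u (n + 1) : Y) ∈ F (u n) := by
    intro n
    rw [husucc]
    exact (Classical.choose_spec (hstep (u n).1 (u n).2)).1
  have hhalf : ∀ n, 2 * g (u (n + 1)) ≤ g (u n) + sInf (g '' F ((u n) : Y)) := by
    intro n
    rw [husucc]
    exact (Classical.choose_spec (hstep (u n).1 (u n).2)).2
  have hdist : ∀ n, dist ((u (n + 1)) : Y) ((u n) : Y) ≤ M * (g (u n) - g (u (n + 1))) := by
    intro n
    have := (hmem n).2
    nlinarith [this]
  have hanti : ∀ n m, n ≤ m → g (u m) ≤ g (u n) := by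
    intro n m hnm
    induction m, hnm using Nat.le_induction with
    | base => exact le_rfl
    | succ m hm ih =>
      have h1 := hdist m
      have h2 : (0:ℝ) ≤ dist ((u (m + 1)) : Y) ((u m) : Y) := dist_nonneg
      nlinarith
  have hchain : ∀ n m, n ≤ m → dist ((u m) : Y) ((u n) : Y) ≤ M * (g (u n) - g (u m)) := by
    intro n m hnm
    induction m, hnm using Nat.le_induction with
    | base => simp
    | succ m hm ih =>
      calc dist ((u (m + 1)) : Y) ((u n) : Y)
          ≤ dist ((u (m + 1)) : Y) ((u m) : Y) + dist ((u m) : Y) ((u n) : Y) := dist_triangle _ _ _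
        _ ≤ M * (g (u m) - g (u (m + 1))) + M * (g (u n) - g (u m)) := add_le_add (hdist m) ih
        _ = M * (g (u n) - g (u (m + 1))) := by ring
  have hbddrange : BddBelow (Set.range fun n => g (u n)) := by
    refine ⟨0, ?_⟩
    rintro t ⟨n, rfl⟩
    exact hg0 _
  set L : ℝ := ⨅ n, g (u n) with hL
  have hLle : ∀ n, L ≤ g (u n) := fun n => ciInf_le hbddrange n
  have htendg : Filter.Tendsto (fun n => g (u n)) Filter.atTop (nhds L) :=
    tendsto_atTop_ciInf (fun n m hnm => hanti n m hnm) hbddrange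
  have hcauchy : CauchySeq (fun n => ((u n) : Y)) := by
    refine cauchySeq_of_le_tendsto_0 (fun N => M * (g (u N) - L)) ?_ ?_
    · intro n m N hn hm
      rcases le_total n m with h | h
      · rw [dist_comm]
        calc dist ((u m) : Y) ((u n) : Y) ≤ M * (g (u n) - g (u m)) := hchain n m h
          _ ≤ M * (g (u N) - L) := by
              have h1 := hanti N n hn
              have h2 := hLle m
              nlinarith
      · calc dist ((u n) : Y) ((u m) : Y) ≤ M * (g (u m) - g (u n)) := hchain m n h
          _ ≤ M * (g (u N) - L) := by
              have h1 := hanti N m hm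
              have h2 := hLle n
              nlinarith
    · have : Filter.Tendsto (fun N => M * (g (u N) - L)) Filter.atTop (nhds (M * (L - L))) :=
        ((htendg.sub_const L).const_mul M)
      simpa using this
  obtain ⟨x, hxlim⟩ := cauchySeq_tendsto_of_complete hcauchy
  have hxS : x ∈ S := hS.mem_of_tendsto hxlim (Filter.Eventually.of_forall fun n => (u n).2)
  have hgx : Filter.Tendsto (fun n => g (u n)) Filter.atTop (nhds (g x)) :=
    (hg.continuousAt.tendsto).comp hxlim
  have hgxL : g x = L := tendsto_nhds_unique hgx htendg
  have hdx : ∀ n, dist x ((u n) : Y) ≤ M * (g (u n) - g x) := by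
    intro n
    have h1 : Filter.Tendsto (fun m => dist ((u m) : Y) ((u n) : Y)) Filter.atTop
        (nhds (dist x ((u n) : Y))) := hxlim.dist tendsto_const_nhds
    have h2 : Filter.Tendsto (fun m => M * (g (u n) - g (u m))) Filter.atTop
        (nhds (M * (g (u n) - g x))) := ((tendsto_const_nhds.sub hgx).const_mul M)
    refine le_of_tendsto_of_tendsto h1 h2 ?_
    filter_upwards [Filter.eventually_ge_atTop n] with m hm
    exact hchain n m hm
  refine ⟨x, hxS, hdx 0, ?_⟩
  intro y hyS hy
  have hyF : ∀ n, y ∈ F ((u n) : Y) := by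
    intro n
    refine ⟨hyS, ?_⟩
    have h1 : dist y ((u n) : Y) ≤ dist y x + dist x ((u n) : Y) := dist_triangle _ _ _
    have h2 := hdx n
    linarith
  have hinfle : ∀ n, sInf (g '' F ((u n) : Y)) ≤ g y := fun n =>
    csInf_le (hbdd _) ⟨y, hyF n, rfl⟩
  have hkey : ∀ n, 2 * g (u (n + 1)) ≤ g (u n) + g y := fun n => (hhalf n).trans
    (by linarith [hinfle n])
  have hgxgy : g x ≤ g y := by
    have h1 : Filter.Tendsto (fun n => 2 * g (u (n + 1))) Filter.atTop (nhds (2 * g x)) :=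
      (hgx.comp (Filter.tendsto_add_atTop_nat 1)).const_mul 2
    have h2 : Filter.Tendsto (fun n => g (u n) + g y) Filter.atTop (nhds (g x + g y)) :=
      hgx.add_const (g y)
    have := le_of_tendsto_of_tendsto h1 h2 (Filter.Eventually.of_forall hkey)
    linarith
  have : dist y x ≤ 0 := by nlinarith
  exact dist_le_zero.mp this

theorem stmt0 {X : Type*} [MetricSpace X] [CompleteSpace X]
    {A B : Set X} (hA : IsClosed A) (hB : IsClosed B) (xbar : X)
    {δ M : ℝ} (hδ : 0 < δ) (hM : 0 < M) (hT : PropT A B xbar δ M)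
    {xA xB : X} (hxA : xA ∈ A) (hdA : dist xA xbar ≤ δ / (1 + 2 * M))
    (hxB : xB ∈ B) (hdB : dist xB xbar ≤ δ / (1 + 2 * M)) :
    ∃ z ∈ A ∩ B, dist z xA ≤ M * dist xA xB ∧ dist z xB ≤ M * dist xA xB := by
  have hS : IsClosed (A ×ˢ B : Set (X × X)) := hA.prod hB
  have hg : Continuous (fun p : X × X => dist p.1 p.2) := continuous_dist
  have hg0 : ∀ p : X × X, 0 ≤ dist p.1 p.2 := fun p => dist_nonneg
  have hx0 : ((xA, xB) : X × X) ∈ A ×ˢ B := ⟨hxA, hxB⟩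
  obtain ⟨x, hxS, hxd, hmin⟩ := evp_aux hS hg hg0 hM hx0
  obtain ⟨a, b⟩ := x
  obtain ⟨haA, hbB⟩ := hxS
  have hdab : max (dist a xA) (dist b xB) ≤ M * (dist xA xB - dist a b) := by
    have := hxd
    rwa [Prod.dist_eq] at this
  have hdaxA : dist a xA ≤ M * dist xA xB := by
    have h1 := le_max_left (dist a xA) (dist b xB)
    have h2 : (0:ℝ) ≤ dist a b := dist_nonneg
    nlinarith [hdab]
  have hdbxB : dist b xB ≤ M * dist xA xB := by
    have h1 := le_max_right (dist a xA) (dist b xB)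
    have h2 : (0:ℝ) ≤ dist a b := dist_nonneg
    nlinarith [hdab]
  have hM1 : (0:ℝ) < 1 + 2 * M := by linarith
  have hxAxB : dist xA xB ≤ 2 * (δ / (1 + 2 * M)) := by
    have := dist_triangle xA xbar xB
    have h2 : dist xbar xB = dist xB xbar := dist_comm _ _
    linarith
  have haball : a ∈ Metric.closedBall xbar δ := by
    rw [Metric.mem_closedBall]
    have h1 : dist a xbar ≤ dist a xA + dist xA xbar := dist_triangle _ _ _
    have h3 : M * dist xA xB ≤ M * (2 * (δ / (1 + 2 * M))) := by nlinarith
    have h4 : M * (2 * (δ / (1 + 2 * M))) + δ / (1 + 2 * M) = δ := by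
      field_simp
      ring
    linarith
  have hbball : b ∈ Metric.closedBall xbar δ := by
    rw [Metric.mem_closedBall]
    have h1 : dist b xbar ≤ dist b xB + dist xB xbar := dist_triangle _ _ _
    have h3 : M * dist xA xB ≤ M * (2 * (δ / (1 + 2 * M))) := by nlinarith
    have h4 : M * (2 * (δ / (1 + 2 * M))) + δ / (1 + 2 * M) = δ := by
      field_simp
      ring
    linarith
  have hab : a = b := by
    by_contra hne
    obtain ⟨θ, hθ, a', ha'A, b', hb'B, hda', hdb', hdab'⟩ :=
      hT.2.2 a ⟨haA, haball⟩ b ⟨hbB, hbball⟩ hne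
    have hy : ((a', b') : X × X) ∈ A ×ˢ B := ⟨ha'A, hb'B⟩
    have hle : M * dist a' b' + dist ((a', b') : X × X) (a, b) ≤ M * dist a b := by
      rw [Prod.dist_eq]
      have h1 : dist a' a = dist a a' := dist_comm _ _
      have h2 : dist b' b = dist b b' := dist_comm _ _
      have h3 : max (dist a' a) (dist b' b) ≤ θ * M := by
        rw [h1, h2]
        exact max_le hda' hdb'
      nlinarith
    have heq := hmin (a', b') hy hle
    have ha'a : a' = a := congrArg Prod.fst heq
    have hb'b : b' = b := congrArg Prod.snd heq
    rw [ha'a, hb'b] at hdab'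
    linarith
  refine ⟨a, ⟨haA, hab ▸ hbB⟩, hdaxA, ?_⟩
  rw [hab]
  exact hdbxB
end

section
/- Let A and B be closed subsets of a complete metric space X and let x̄ ∈ X. If A and B have property (T) at x̄, then there exist K > 0 and δ > 0 such that d(x, A ∩ B) ≤ K(d(x, A) + d(x, B)) for all x in the open ball B_δ(x̄). -/
/-!
Ekeland's variational principle, applied to `(u, v) ↦ d(u, v)` on the complete space `A × B`
with slope `1/M` and started at near-best approximations `a ∈ A`, `b ∈ B` of `x`, yields a pair
`(z_A, z_B)` within `M · d(a, b)` of `(a, b)` that no pair at distance `≤ θM` can shorten by `θ`.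
Property (T) supplies exactly such a shortening unless `z_A = z_B`, so `z_A ∈ A ∩ B`, and
`d(x, z_A) ≤ d(x, a) + M (d(x, a) + d(x, b))`.
-/

open Metric Set
open scoped ENNReal

open Filter Topology

section Ekeland

variable {Y : Type*} [MetricSpace Y]

def ekelandSet (f : Y → ℝ) (ε : ℝ) (y : Y) : Set Y :=
  {w | f w + ε * dist y w ≤ f y}

variable {f : Y → ℝ} {ε : ℝ}

lemma self_mem_ekelandSet (y : Y) : y ∈ ekelandSet f ε y := by
  simp [ekelandSet]

lemma ekelandSet_subset_of_mem (hε : 0 ≤ ε) {y w : Y} (hw : w ∈ ekelandSet f ε y) :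
    ekelandSet f ε w ⊆ ekelandSet f ε y := fun v hv => by
  simp only [ekelandSet, mem_ofPred_eq] at hw hv ⊢
  nlinarith [dist_triangle y w v]

lemma LowerSemicontinuous.isClosed_ekelandSet (hf : LowerSemicontinuous f) (y : Y) :
    IsClosed (ekelandSet f ε y) :=
  (hf.add (continuous_const.mul (continuous_const.dist continuous_id)).lowerSemicontinuous)
    |>.isClosed_preimage (f y)

lemma exists_mem_ekelandSet_forall_dist_lt (hbdd : BddBelow (range f)) (hε : 0 < ε) {η : ℝ}
    (hη : 0 < η) (y : Y) : ∃ w ∈ ekelandSet f ε y, ∀ v ∈ ekelandSet f ε w, dist w v < η := by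
  set m := sInf (f '' ekelandSet f ε y)
  have hbdd' : BddBelow (f '' ekelandSet f ε y) := hbdd.mono (image_subset_range _ _)
  obtain ⟨_, ⟨w, hw, rfl⟩, hfw⟩ : ∃ t ∈ f '' ekelandSet f ε y, t < m + ε * η :=
    exists_lt_of_csInf_lt ⟨f y, y, self_mem_ekelandSet y, rfl⟩
      (lt_add_of_pos_right _ (mul_pos hε hη))
  refine ⟨w, hw, fun v hv => ?_⟩
  have hm : m ≤ f v := csInf_le hbdd' ⟨v, ekelandSet_subset_of_mem hε.le hw hv, rfl⟩
  have hv' : f v + ε * dist w v ≤ f w := hv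
  exact lt_of_mul_lt_mul_left (by linarith) hε.le

/-- Ekeland's variational principle. -/
theorem LowerSemicontinuous.exists_forall_lt_add_mul_dist [CompleteSpace Y]
    (hf : LowerSemicontinuous f) (hbdd : BddBelow (range f)) (hε : 0 < ε) (y₀ : Y) :
    ∃ z ∈ ekelandSet f ε y₀, ∀ y ≠ z, f z < f y + ε * dist z y := by
  choose next hnext_mem hnext_dist using fun (n : ℕ) (y : Y) =>
    exists_mem_ekelandSet_forall_dist_lt hbdd hε (Nat.one_div_pos_of_nat (n := n)) y
  obtain ⟨u, hu_zero, hu_succ⟩ : ∃ u : ℕ → Y, u 0 = y₀ ∧ ∀ n, u (n + 1) = next n (u n) :=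
    ⟨fun n => Nat.rec y₀ next n, rfl, fun _ => rfl⟩
  set s : ℕ → Set Y := fun n => ekelandSet f ε (u (n + 1)) with hs
  have hs_antitone : Antitone s := antitone_nat_of_succ_le fun n => by
    simp only [hs, hu_succ (n + 1)]
    exact ekelandSet_subset_of_mem hε.le (hnext_mem _ _)
  have hs_ball (n : ℕ) : s n ⊆ closedBall (u (n + 1)) (1 / (n + 1)) := fun v hv => by
    simp only [hs, hu_succ] at hv ⊢
    exact mem_closedBall'.2 (hnext_dist n (u n) v hv).le
  have hs_bdd (n : ℕ) : Bornology.IsBounded (s n) := isBounded_closedBall.subset (hs_ball n)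
  have hs_diam : Tendsto (fun n => diam (s n)) atTop (𝓝 0) := by
    refine squeeze_zero (g := fun n : ℕ => 2 * (1 / ((n : ℝ) + 1))) (fun _ => diam_nonneg)
      (fun n => ?_)
      (by simpa using (tendsto_one_div_add_atTop_nhds_zero_nat (𝕜 := ℝ)).const_mul 2)
    exact (diam_mono (hs_ball n) isBounded_closedBall).trans (diam_closedBall (by positivity))
  obtain ⟨z, hz⟩ := nonempty_iInter_of_nonempty_biInter
    (fun n => hf.isClosed_ekelandSet _) hs_bdd
    (fun N => ⟨u (N + 1), mem_iInter₂.2 fun n hn => hs_antitone hn (self_mem_ekelandSet _)⟩)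
    hs_diam
  rw [mem_iInter] at hz
  have hu_one : u 1 ∈ ekelandSet f ε y₀ := by
    rw [hu_succ, hu_zero]
    exact hnext_mem 0 y₀
  refine ⟨z, ekelandSet_subset_of_mem hε.le hu_one (hz 0), fun y hyz => ?_⟩
  by_contra! hy
  have hy_mem (n : ℕ) : y ∈ s n := ekelandSet_subset_of_mem hε.le (hz n) hy
  exact hyz (dist_le_zero.1 (ge_of_tendsto' hs_diam fun n =>
    dist_le_diam_of_mem (hs_bdd n) (hy_mem n) (hz n)))

end Ekeland

namespace PropT

variable {X : Type*} [MetricSpace X] {A B : Set X} {xbar : X} {δ M : ℝ}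

lemma eq_of_forall_dist_lt_dist_add (hT : PropT A B xbar δ M) (hM : 0 < M) {zA zB : X}
    (hzA : zA ∈ A ∩ closedBall xbar δ) (hzB : zB ∈ B ∩ closedBall xbar δ)
    (hmin : ∀ u ∈ A, ∀ v ∈ B, (u, v) ≠ (zA, zB) →
      dist zA zB < dist u v + M⁻¹ * dist (zA, zB) (u, v)) :
    zA = zB := by
  by_contra hne
  obtain ⟨θ, hθ, zA', hzA', zB', hzB', hA', hB', hdist⟩ := hT.2.2 zA hzA zB hzB hne
  by_cases hsame : (zA', zB') = (zA, zB)
  · obtain ⟨rfl, rfl⟩ := Prod.ext_iff.1 hsame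
    linarith
  have hlt := hmin zA' hzA' zB' hzB' hsame
  have hstep : M⁻¹ * dist (zA, zB) (zA', zB') ≤ θ :=
    (inv_mul_le_iff₀ hM).2 (by rw [Prod.dist_eq]; linarith [max_le hA' hB'])
  linarith

lemma exists_mem_inter_dist_le [CompleteSpace X] (hT : PropT A B xbar δ M) (hM : 0 < M)
    (hA : IsClosed A) (hB : IsClosed B) {a b : X} (ha : a ∈ A) (hb : b ∈ B)
    (hax : dist a xbar ≤ δ / (1 + 2 * M)) (hbx : dist b xbar ≤ δ / (1 + 2 * M)) :
    ∃ z ∈ A ∩ B, dist a z ≤ M * dist a b := by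
  have : CompleteSpace (A ×ˢ B) := (hA.prod hB).completeSpace_coe
  let f : (A ×ˢ B : Set (X × X)) → ℝ := fun p => dist p.1.1 p.1.2
  have hf : Continuous f := continuous_subtype_val.fst.dist continuous_subtype_val.snd
  obtain ⟨⟨⟨zA, zB⟩, hzA, hzB⟩, hz_descent, hz_min⟩ :=
    hf.lowerSemicontinuous.exists_forall_lt_add_mul_dist
      ⟨0, by rintro _ ⟨p, rfl⟩; exact dist_nonneg⟩ (inv_pos.2 hM) ⟨(a, b), ha, hb⟩
  replace hz_descent : dist zA zB + M⁻¹ * max (dist a zA) (dist b zB) ≤ dist a b := by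
    simpa [ekelandSet, f, Subtype.dist_eq, Prod.dist_eq] using hz_descent
  have hmove : max (dist a zA) (dist b zB) ≤ M * dist a b :=
    (inv_mul_le_iff₀ hM).1 (by linarith [dist_nonneg (x := zA) (y := zB)])
  have hMab : M * dist a b ≤ M * (2 * (δ / (1 + 2 * M))) :=
    mul_le_mul_of_nonneg_left (by linarith [dist_triangle_right a b xbar]) hM.le
  have hδ : δ / (1 + 2 * M) + M * (2 * (δ / (1 + 2 * M))) = δ := by
    field_simp
  have hzA_ball : dist zA xbar ≤ δ := by
    linarith [dist_triangle_left zA xbar a, le_max_left (dist a zA) (dist b zB)]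
  have hzB_ball : dist zB xbar ≤ δ := by
    linarith [dist_triangle_left zB xbar b, le_max_right (dist a zA) (dist b zB)]
  have hzAB : zA = zB :=
    hT.eq_of_forall_dist_lt_dist_add hM ⟨hzA, mem_closedBall.2 hzA_ball⟩
      ⟨hzB, mem_closedBall.2 hzB_ball⟩ fun u hu v hv huv =>
        hz_min ⟨(u, v), hu, hv⟩ fun h => huv (congrArg Subtype.val h)
  exact ⟨zA, ⟨hzA, hzAB ▸ hzB⟩, (le_max_left _ _).trans hmove⟩

lemma exists_mem_inter_dist_le_mul_infDist [CompleteSpace X] (hT : PropT A B xbar δ M)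
    (hM : 0 < M) (hA : IsClosed A) (hB : IsClosed B) {x : X}
    (hx : dist x xbar < δ / (8 * (1 + 2 * M))) :
    ∃ z ∈ A ∩ B, dist x z ≤ 3 * (1 + M) * (infDist x A + infDist x B) := by
  set r := δ / (2 * (1 + 2 * M)) with hr
  have hr8 : δ / (8 * (1 + 2 * M)) = r / 4 := by rw [hr]; field_simp; ring
  have hr2 : δ / (1 + 2 * M) = 2 * r := by rw [hr]; field_simp
  rw [hr8] at hx
  obtain ⟨a₀, ha₀, ha₀x : dist a₀ xbar < r⟩ := hT.1
  obtain ⟨b₀, hb₀, hb₀x : dist b₀ xbar < r⟩ := hT.2.1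
  have hdA : infDist x A < r / 4 + r :=
    (infDist_le_dist_of_mem ha₀).trans_lt (by linarith [dist_triangle_right x a₀ xbar])
  have hdB : infDist x B < r / 4 + r :=
    (infDist_le_dist_of_mem hb₀).trans_lt (by linarith [dist_triangle_right x b₀ xbar])
  have hA₀ : 0 ≤ infDist x A := infDist_nonneg
  have hB₀ : 0 ≤ infDist x B := infDist_nonneg
  rcases (add_nonneg hA₀ hB₀).eq_or_lt with h0 | hpos
  · have hxA : x ∈ A := (hA.mem_iff_infDist_zero ⟨a₀, ha₀⟩).2 (by linarith)
    have hxB : x ∈ B := (hB.mem_iff_infDist_zero ⟨b₀, hb₀⟩).2 (by linarith)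
    exact ⟨x, ⟨hxA, hxB⟩, by rw [← h0, dist_self, mul_zero]⟩
  -- `η ≤ infDist x A + infDist x B` lets the approximation error be absorbed into the constant
  set η := min (r / 4) (infDist x A + infDist x B)
  have hη : 0 < η := lt_min (by linarith [dist_nonneg (x := x) (y := xbar)]) hpos
  have hηr : η ≤ r / 4 := min_le_left _ _
  have hηd : η ≤ infDist x A + infDist x B := min_le_right _ _
  obtain ⟨a, ha, hxa⟩ := (infDist_lt_iff ⟨a₀, ha₀⟩).1 (lt_add_of_pos_right (infDist x A) hη)
  obtain ⟨b, hb, hxb⟩ := (infDist_lt_iff ⟨b₀, hb₀⟩).1 (lt_add_of_pos_right (infDist x B) hη)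
  obtain ⟨z, hz, haz⟩ := hT.exists_mem_inter_dist_le hM hA hB ha hb
    (by rw [hr2]; linarith [dist_triangle_left a xbar x])
    (by rw [hr2]; linarith [dist_triangle_left b xbar x])
  refine ⟨z, hz, ?_⟩
  have hab : M * dist a b ≤ M * (dist x a + dist x b) :=
    mul_le_mul_of_nonneg_left (dist_triangle_left a b x) hM.le
  calc dist x z ≤ dist x a + dist a z := dist_triangle _ _ _
    _ ≤ (1 + M) * (dist x a + dist x b) := by nlinarith [dist_nonneg (x := x) (y := b)]
    _ ≤ (1 + M) * (3 * (infDist x A + infDist x B)) :=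
      mul_le_mul_of_nonneg_left (by linarith) (by linarith)
    _ = 3 * (1 + M) * (infDist x A + infDist x B) := by ring

end PropT

lemma Metric.infEDist_le_ofReal_mul_add_of_dist_le {X : Type*} [PseudoMetricSpace X]
    {s t u : Set X} {x z : X} (hz : z ∈ u) {K : ℝ} (hK : 0 ≤ K)
    (h : dist x z ≤ K * (infDist x s + infDist x t)) :
    infEDist x u ≤ ENNReal.ofReal K * (infEDist x s + infEDist x t) :=
  calc infEDist x u ≤ edist x z := infEDist_le_edist_of_mem hz
    _ = ENNReal.ofReal (dist x z) := edist_dist _ _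
    _ ≤ ENNReal.ofReal (K * (infDist x s + infDist x t)) := ENNReal.ofReal_le_ofReal h
    _ = ENNReal.ofReal K * (ENNReal.ofReal (infDist x s) + ENNReal.ofReal (infDist x t)) := by
      rw [ENNReal.ofReal_mul hK, ENNReal.ofReal_add infDist_nonneg infDist_nonneg]
    _ ≤ ENNReal.ofReal K * (infEDist x s + infEDist x t) := by
      gcongr <;> exact ENNReal.ofReal_toReal_le

theorem stmt1 {X : Type*} [MetricSpace X] [CompleteSpace X]
    {A B : Set X} (hA : IsClosed A) (hB : IsClosed B) (xbar : X)
    (hT : ∃ δ > 0, ∃ M > 0, PropT A B xbar δ M) :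
    ∃ K > 0, ∃ δ > 0, ∀ x ∈ Metric.ball xbar δ,
      EMetric.infEdist x (A ∩ B) ≤
        ENNReal.ofReal K * (EMetric.infEdist x A + EMetric.infEdist x B) := by
  obtain ⟨δ, hδ, M, hM, hT⟩ := hT
  refine ⟨3 * (1 + M), by positivity, δ / (8 * (1 + 2 * M)), by positivity, fun x hx => ?_⟩
  obtain ⟨z, hz, hxz⟩ := hT.exists_mem_inter_dist_le_mul_infDist hM hA hB (mem_ball.1 hx)
  exact infEDist_le_ofReal_mul_add_of_dist_le hz (by positivity) hxz
end

section
/- Let A and B be closed subsets of a complete metric space X and let x̄ ∈ X. If there exist K > 0 and δ > 0 such that d(x, A ∩ B) ≤ K(d(x, A) + d(x, B)) for all x in the open ball B_δ(x̄), and moreover A ∩ B(x̄, δ/(4K+10)) ≠ ∅ and B ∩ B(x̄, δ/(4K+10)) ≠ ∅, then A and B have property (T) at x̄. -/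
open Metric Set
open scoped ENNReal

/-! Both points jump to one point `z ∈ A ∩ B` with `d(xA, z) < (K + 1/2) d(xA, xB)`, supplied by the
error bound at `xA` since `d(xA, A) = 0` and `d(xA, B) ≤ d(xA, xB)`; with `θ = d(xA, xB)` the new
distance `0` is `d(xA, xB) - θ` and both jumps are at most `(K + 3/2) θ`. The radius
`δ' = δ (4K + 8) / (4K + 10) < δ` is chosen so that `δ' / (2 (1 + 2M)) = δ / (4K + 10)` for
`M = K + 3/2`. -/

section

variable {X : Type*} [MetricSpace X] {A B : Set X} {K : ℝ} {x y : X}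

theorem exists_mem_inter_dist_lt_of_infEDist_le {c : ℝ} (hc : 0 < c) (hKc : K < c)
    (hx : x ∈ A) (hy : y ∈ B) (hxy : x ≠ y)
    (hineq : infEDist x (A ∩ B) ≤
      ENNReal.ofReal K * (infEDist x A + infEDist x B)) :
    ∃ z ∈ A ∩ B, dist x z < c * dist x y := by
  have hbound : infEDist x (A ∩ B) ≤ ENNReal.ofReal K * edist x y :=
    calc infEDist x (A ∩ B)
        ≤ ENNReal.ofReal K * (infEDist x A + infEDist x B) := hineq
      _ ≤ ENNReal.ofReal K * edist x y := by
          rw [infEDist_zero_of_mem hx, zero_add]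
          exact mul_le_mul_right (infEDist_le_edist_of_mem hy) _
  have hlt : infEDist x (A ∩ B) < ENNReal.ofReal (c * dist x y) := by
    refine hbound.trans_lt ?_
    rw [ENNReal.ofReal_mul hc.le, ← edist_dist]
    exact ENNReal.mul_lt_mul_left (edist_pos.mpr hxy).ne' (edist_ne_top x y)
      (ENNReal.ofReal_lt_ofReal_iff hc |>.mpr hKc)
  obtain ⟨z, hz, hxz⟩ := infEDist_lt_iff.mp hlt
  exact ⟨z, hz, edist_lt_ofReal.mp hxz⟩

theorem exists_step_to_inter_of_infEDist_le (hK : 0 ≤ K)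
    (hx : x ∈ A) (hy : y ∈ B) (hxy : x ≠ y)
    (hineq : infEDist x (A ∩ B) ≤
      ENNReal.ofReal K * (infEDist x A + infEDist x B)) :
    ∃ θ > 0, ∃ x' ∈ A, ∃ y' ∈ B, dist x x' ≤ θ * (K + 3 / 2) ∧
      dist y y' ≤ θ * (K + 3 / 2) ∧ dist x' y' ≤ dist x y - θ := by
  obtain ⟨z, ⟨hzA, hzB⟩, hxz⟩ :=
    exists_mem_inter_dist_lt_of_infEDist_le (c := K + 1 / 2) (by positivity) (by linarith)
      hx hy hxy hineq
  have hθ : 0 < dist x y := dist_pos.mpr hxy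
  refine ⟨dist x y, hθ, z, hzA, z, hzB, by nlinarith, ?_, by simp⟩
  calc dist y z ≤ dist y x + dist x z := dist_triangle y x z
    _ ≤ dist x y * (K + 3 / 2) := by rw [dist_comm y x]; nlinarith

end

theorem stmt2_general {X : Type*} [MetricSpace X]
    {A B : Set X} (xbar : X)
    {K δ : ℝ} (hK : 0 < K) (hδ : 0 < δ)
    (hineq : ∀ x ∈ Metric.ball xbar δ,
      EMetric.infEdist x (A ∩ B) ≤
        ENNReal.ofReal K * (EMetric.infEdist x A + EMetric.infEdist x B))
    (hAne : (A ∩ Metric.ball xbar (δ / (4 * K + 10))).Nonempty)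
    (hBne : (B ∩ Metric.ball xbar (δ / (4 * K + 10))).Nonempty) :
    ∃ δ' > 0, ∃ M > 0, PropT A B xbar δ' M := by
  set δ' : ℝ := δ * (4 * K + 8) / (4 * K + 10) with hδ'
  have hrad : δ' / (2 * (1 + 2 * (K + 3 / 2))) = δ / (4 * K + 10) := by
    rw [hδ']
    field_simp
    ring
  have hδ'δ : δ' < δ := by
    rw [div_lt_iff₀ (by positivity)]
    nlinarith
  refine ⟨δ', by positivity, K + 3 / 2, by positivity, hrad ▸ hAne, hrad ▸ hBne, ?_⟩
  rintro xA ⟨hxA, hxAδ'⟩ xB ⟨hxB, -⟩ hne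
  exact exists_step_to_inter_of_infEDist_le hK.le hxA hxB hne
    (hineq xA (mem_ball.mpr (lt_of_le_of_lt (mem_closedBall.mp hxAδ') hδ'δ)))

theorem stmt2 {X : Type*} [MetricSpace X] [CompleteSpace X]
    {A B : Set X} (hA : IsClosed A) (hB : IsClosed B) (xbar : X)
    {K δ : ℝ} (hK : 0 < K) (hδ : 0 < δ)
    (hineq : ∀ x ∈ Metric.ball xbar δ,
      EMetric.infEdist x (A ∩ B) ≤
        ENNReal.ofReal K * (EMetric.infEdist x A + EMetric.infEdist x B))
    (hAne : (A ∩ Metric.ball xbar (δ / (4 * K + 10))).Nonempty)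
    (hBne : (B ∩ Metric.ball xbar (δ / (4 * K + 10))).Nonempty) :
    ∃ δ' > 0, ∃ M > 0, PropT A B xbar δ' M :=
  stmt2_general xbar hK hδ hineq hAne hBne
end

section
/- Let A and B be closed subsets of a complete metric space X and let x̄ ∈ A ∩ B. Then A and B have property (T) at x̄ if and only if A and B are subtransversal at x̄. -/
/-!
Subtransversality gives property (T) directly: for `xA ∈ A` and `xB ∈ B` near `x̄`, a point
`w ∈ A ∩ B` with `d(xA, w) < (K + 1) d(xA, xB)` serves as both `x̂A` and `x̂B`, with
`θ = d(xA, xB)`.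

Conversely, given `xA ∈ A` and `xB ∈ B` near `x̄`, apply Ekeland's variational principle with
slope `1 / (2M)` to `(uA, uB) ↦ d(uA, uB)` on `(A × B) ∩ (B̄_δ(x̄) × B̄_δ(x̄))`, starting from
`(xA, xB)`. At the Ekeland point `(uA, uB)`, a step supplied by property (T) would decrease the
distance by `θ` while moving the pair by at most `θM`, which costs only `θ / 2` in the Ekeland
inequality; hence `uA = uB`, a point of `A ∩ B` within `2M d(xA, xB)` of `xA`. Letting `xA`, `xB`
approach nearest points of `x` gives `d(x, A ∩ B) ≤ (1 + 2M)(d(x, A) + d(x, B))`.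

Ekeland's principle itself is proved along the greedy sequence in which each step goes at least
halfway down to the infimum of `f` on the cone `{z | f z + σ d(y, z) ≤ f y}`.
-/

open Metric Set
open scoped ENNReal

/-- Subtransversality of closed sets `A`, `B` at a point `x0 ∈ A ∩ B`. -/
def Subtrans {X : Type*} [MetricSpace X] (A B : Set X) (x0 : X) : Prop :=
  ∃ K > 0, ∃ δ > 0, ∀ x ∈ Metric.ball x0 δ,
    EMetric.infEdist x (A ∩ B) ≤
      ENNReal.ofReal K * (EMetric.infEdist x A + EMetric.infEdist x B)

open Filter Topology

section Ekeland

variable {Y : Type*} [PseudoMetricSpace Y] {S : Set Y} {f : Y → ℝ} {σ : ℝ}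

lemma exists_halfway_descent_step (hbdd : BddBelow (f '' S)) {y : Y} (hy : y ∈ S) :
    ∃ z ∈ S, f z + σ * dist y z ≤ f y ∧
      ∀ w ∈ S, f w + σ * dist y w ≤ f y → 2 * f z ≤ f y + f w := by
  set T := {z ∈ S | f z + σ * dist y z ≤ f y}
  have hyT : y ∈ T := ⟨hy, by simp⟩
  have hbddT : BddBelow (f '' T) := hbdd.mono (image_mono (sep_subset _ _))
  have hinf_le (w : Y) (hw : w ∈ T) : sInf (f '' T) ≤ f w :=
    csInf_le hbddT (mem_image_of_mem f hw)
  suffices ∃ z ∈ T, 2 * f z ≤ f y + sInf (f '' T) by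
    obtain ⟨z, ⟨hzS, hz⟩, hgap⟩ := this
    exact ⟨z, hzS, hz, fun w hwS hw ↦ by linarith [hinf_le w ⟨hwS, hw⟩]⟩
  rcases (hinf_le y hyT).eq_or_lt with h | h
  · exact ⟨y, hyT, by linarith⟩
  · obtain ⟨_, ⟨z, hzT, rfl⟩, hz⟩ :=
      exists_lt_of_csInf_lt ⟨f y, mem_image_of_mem f hyT⟩
        (by linarith : sInf (f '' T) < (f y + sInf (f '' T)) / 2)
    exact ⟨z, hzT, by linarith⟩

lemma antitone_of_descent (hσ : 0 ≤ σ) {u : ℕ → Y}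
    (hu : ∀ n, f (u (n + 1)) + σ * dist (u n) (u (n + 1)) ≤ f (u n)) :
    Antitone fun n ↦ f (u n) :=
  antitone_nat_of_succ_le fun n ↦ by
    linarith [hu n, mul_nonneg hσ (dist_nonneg (x := u n) (y := u (n + 1)))]

lemma mul_dist_le_sub_of_descent (hσ : 0 ≤ σ) {u : ℕ → Y}
    (hu : ∀ n, f (u (n + 1)) + σ * dist (u n) (u (n + 1)) ≤ f (u n))
    {n k : ℕ} (hnk : n ≤ k) :
    σ * dist (u n) (u k) ≤ f (u n) - f (u k) := by
  induction k, hnk using Nat.le_induction with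
  | base => simp
  | succ k _ ih => nlinarith [hu k, dist_triangle (u n) (u k) (u (k + 1))]

lemma cauchySeq_of_descent (hσ : 0 < σ) {u : ℕ → Y}
    (hu : ∀ n, f (u (n + 1)) + σ * dist (u n) (u (n + 1)) ≤ f (u n)) {L : ℝ}
    (hL : Tendsto (fun n ↦ f (u n)) atTop (𝓝 L)) :
    CauchySeq u := by
  refine Metric.cauchySeq_iff'.2 fun ε hε ↦ ?_
  obtain ⟨N, hN⟩ :=
    (hL.eventually_lt_const (by nlinarith : L < L + σ * ε)).exists_forall_of_atTop
  refine ⟨N, fun n hn ↦ ?_⟩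
  have hLn : L ≤ f (u n) := (antitone_of_descent hσ.le hu).le_of_tendsto hL n
  have hdist : σ * dist (u N) (u n) < σ * ε := by
    linarith [mul_dist_le_sub_of_descent hσ.le hu hn, hN N le_rfl]
  rw [dist_comm]
  exact lt_of_mul_lt_mul_left hdist hσ.le

theorem LowerSemicontinuous.exists_ekeland [CompleteSpace Y] (hf : LowerSemicontinuous f)
    (hS : IsClosed S) (hbdd : BddBelow (f '' S)) (hσ : 0 < σ) {y₀ : Y} (hy₀ : y₀ ∈ S) :
    ∃ y ∈ S, σ * dist y₀ y ≤ f y₀ - f y ∧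
      ∀ z ∈ S, f y ≤ f z + σ * dist y z := by
  choose! g hgS hg_desc hg_gap using
    fun y (hy : y ∈ S) ↦ exists_halfway_descent_step (σ := σ) hbdd hy
  set u : ℕ → Y := fun n ↦ g^[n] y₀
  have hu_succ (n : ℕ) : u (n + 1) = g (u n) := Function.iterate_succ_apply' g n y₀
  have huS (n : ℕ) : u n ∈ S := by
    induction n with
    | zero => exact hy₀
    | succ n ih => rw [hu_succ]; exact hgS _ ih
  have hu_desc (n : ℕ) : f (u (n + 1)) + σ * dist (u n) (u (n + 1)) ≤ f (u n) := by
    rw [hu_succ]; exact hg_desc _ (huS n)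
  have hanti := antitone_of_descent hσ.le hu_desc
  obtain ⟨L, hL⟩ : ∃ L, Tendsto (fun n ↦ f (u n)) atTop (𝓝 L) :=
    ⟨_, tendsto_atTop_ciInf hanti
      (hbdd.mono (range_subset_iff.2 fun n ↦ mem_image_of_mem f (huS n)))⟩
  obtain ⟨y, hy⟩ := cauchySeq_tendsto_of_complete (cauchySeq_of_descent hσ hu_desc hL)
  -- the sublevel sets of `f` are closed and contain the tails of `u`
  have hfy_le (n : ℕ) : f y ≤ f (u n) :=
    (hf.isClosed_preimage (f (u n))).mem_of_tendsto hy
      (eventually_atTop.2 ⟨n, fun k hk ↦ hanti hk⟩)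
  refine ⟨y, hS.mem_of_tendsto hy (Eventually.of_forall huS), ?_, fun z hz ↦ ?_⟩
  · refine le_of_tendsto' ((tendsto_const_nhds.dist hy).const_mul σ) fun n ↦ ?_
    have : σ * dist y₀ (u n) ≤ f y₀ - f (u n) :=
      mul_dist_le_sub_of_descent hσ.le hu_desc (Nat.zero_le n)
    linarith [hfy_le n]
  · by_contra! hzy
    have hnear : ∀ᶠ n in atTop, f z + σ * dist (u n) z < f y :=
      (tendsto_const_nhds.add ((hy.dist tendsto_const_nhds).const_mul σ)).eventually_lt_const hzy
    have hgap : ∀ᶠ n in atTop, 2 * L ≤ f (u n) + f z := by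
      filter_upwards [hnear] with n hn
      have := hg_gap _ (huS n) z hz (by linarith [hfy_le n])
      rw [← hu_succ] at this
      linarith [hanti.le_of_tendsto hL (n + 1)]
    have hLz : L ≤ f z := by linarith [ge_of_tendsto (hL.add_const (f z)) hgap]
    linarith [ge_of_tendsto' hL hfy_le, mul_nonneg hσ.le (dist_nonneg (x := y) (y := z))]

end Ekeland

section PropT

variable {X : Type*} [MetricSpace X] {A B : Set X} {x0 : X}

lemma infEDist_eq_ofReal_infDist {s : Set X} (hs : s.Nonempty) (x : X) :
    infEDist x s = ENNReal.ofReal (infDist x s) := by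
  rw [infDist, ENNReal.ofReal_toReal (infEDist_ne_top hs)]

lemma subtrans_iff_infDist (h : (A ∩ B).Nonempty) :
    Subtrans A B x0 ↔ ∃ K > 0, ∃ δ > 0, ∀ x ∈ ball x0 δ,
      infDist x (A ∩ B) ≤ K * (infDist x A + infDist x B) := by
  have hA : A.Nonempty := h.mono inter_subset_left
  have hB : B.Nonempty := h.mono inter_subset_right
  unfold Subtrans
  refine exists_congr fun K ↦ and_congr_right fun hK ↦ exists_congr fun δ ↦ and_congr_right
    fun _ ↦ forall₂_congr fun x _ ↦ ?_
  change infEDist x (A ∩ B) ≤ ENNReal.ofReal K * (infEDist x A + infEDist x B) ↔ _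
  rw [infEDist_eq_ofReal_infDist h, infEDist_eq_ofReal_infDist hA, infEDist_eq_ofReal_infDist hB,
    ← ENNReal.ofReal_add infDist_nonneg infDist_nonneg, ← ENNReal.ofReal_mul hK.le,
    ENNReal.ofReal_le_ofReal_iff (mul_nonneg hK.le (add_nonneg infDist_nonneg infDist_nonneg))]

lemma PropT.exists_mem_inter_dist_le_s3 [CompleteSpace X] (hA : IsClosed A) (hB : IsClosed B)
    {δ M : ℝ} (hT : PropT A B x0 δ M) (hM : 0 < M) {xA xB : X} (hxA : xA ∈ A) (hxB : xB ∈ B)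
    (hxA_near : dist xA x0 + 2 * M * dist xA xB ≤ δ)
    (hxB_near : dist xB x0 + 2 * M * dist xA xB ≤ δ) :
    ∃ w ∈ A ∩ B, dist xA w ≤ 2 * M * dist xA xB := by
  set S := (A ∩ closedBall x0 δ) ×ˢ (B ∩ closedBall x0 δ)
  have hS : IsClosed S := (hA.inter isClosed_closedBall).prod (hB.inter isClosed_closedBall)
  have hMx : 0 ≤ 2 * M * dist xA xB := mul_nonneg (by positivity) dist_nonneg
  have hx_S : (xA, xB) ∈ S :=
    ⟨⟨hxA, mem_closedBall.2 (by linarith)⟩, ⟨hxB, mem_closedBall.2 (by linarith)⟩⟩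
  obtain ⟨⟨uA, uB⟩, hu_S, hmove, hmin⟩ :=
    (continuous_fst.dist continuous_snd).lowerSemicontinuous.exists_ekeland hS
      ⟨0, by rintro _ ⟨p, -, rfl⟩; exact dist_nonneg⟩
      (inv_pos.2 (by positivity : 0 < 2 * M)) hx_S
  obtain ⟨⟨huA, huA_near⟩, huB, huB_near⟩ := hu_S
  rw [Prod.dist_eq, inv_mul_le_iff₀ (by positivity), max_le_iff] at hmove
  obtain ⟨hmoveA, hmoveB⟩ := hmove
  dsimp only at huA huA_near huB huB_near hmoveA hmoveB hmin
  rw [mem_closedBall] at huA_near huB_near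
  have hu : uA = uB := by
    by_contra hne
    obtain ⟨θ, hθ, xA', hxA', xB', hxB', hθA, hθB, hθ_drop⟩ :=
      hT.2.2 uA ⟨huA, huA_near⟩ uB ⟨huB, huB_near⟩ hne
    have hθM : θ * M ≤ M * dist uA uB := by nlinarith [dist_nonneg (x := xA') (y := xB')]
    have hMu : 0 ≤ M * dist uA uB := mul_nonneg hM.le dist_nonneg
    have hx'_S : (xA', xB') ∈ S := by
      refine ⟨⟨hxA', mem_closedBall.2 ?_⟩, ⟨hxB', mem_closedBall.2 ?_⟩⟩ <;> dsimp only
      · linarith [dist_triangle4 xA' uA xA x0, dist_comm xA' uA, dist_comm uA xA]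
      · linarith [dist_triangle4 xB' uB xB x0, dist_comm xB' uB, dist_comm uB xB]
    have hshift : (2 * M)⁻¹ * dist (uA, uB) (xA', xB') ≤ θ / 2 := by
      rw [inv_mul_le_iff₀ (by positivity), Prod.dist_eq, max_le_iff]
      constructor <;> linarith
    linarith [hmin _ hx'_S]
  subst hu
  exact ⟨uA, ⟨huA, huB⟩, by simpa using hmoveA⟩

lemma PropT.infDist_inter_le [CompleteSpace X] (hA : IsClosed A) (hB : IsClosed B) {δ M : ℝ}
    (hT : PropT A B x0 δ M) (hM : 0 < M) (hx0 : x0 ∈ A ∩ B) {x : X}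
    (hx : dist x x0 < δ / (4 * (1 + 2 * M))) :
    infDist x (A ∩ B) ≤ (1 + 2 * M) * (infDist x A + infDist x B) := by
  set ρ := δ / (4 * (1 + 2 * M))
  have hρ : ρ * (4 * (1 + 2 * M)) = δ := div_mul_cancel₀ _ (by positivity)
  have hρ_pos : 0 < ρ := dist_nonneg.trans_lt hx
  have hxA_ρ : infDist x A < ρ := (infDist_le_dist_of_mem hx0.1).trans_lt hx
  have hxB_ρ : infDist x B < ρ := (infDist_le_dist_of_mem hx0.2).trans_lt hx
  have happrox : ∀ ε, 0 < ε → ε ≤ ρ →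
      infDist x (A ∩ B) ≤ (1 + 2 * M) * (infDist x A + infDist x B) + (1 + 4 * M) * ε := by
    intro ε hε hερ
    obtain ⟨xA, hxA, hxA_dist⟩ := (infDist_lt_iff ⟨x0, hx0.1⟩).1 (lt_add_of_pos_right _ hε)
    obtain ⟨xB, hxB, hxB_dist⟩ := (infDist_lt_iff ⟨x0, hx0.2⟩).1 (lt_add_of_pos_right _ hε)
    have hAB : dist xA xB ≤ infDist x A + infDist x B + 2 * ε := by
      linarith [dist_triangle_left xA xB x]
    have hMAB : 2 * M * dist xA xB ≤ 2 * M * (infDist x A + infDist x B + 2 * ε) := by gcongr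
    have hAB_ρ : 2 * M * dist xA xB ≤ 2 * M * (4 * ρ) := by gcongr; linarith
    obtain ⟨w, hw, hxA_w⟩ := hT.exists_mem_inter_dist_le_s3 hA hB hM hxA hxB
      (by linarith [dist_triangle_left xA x0 x]) (by linarith [dist_triangle_left xB x0 x])
    calc infDist x (A ∩ B) ≤ dist x xA + dist xA w :=
          (infDist_le_dist_of_mem hw).trans (dist_triangle _ _ _)
      _ ≤ _ := by linarith [infDist_nonneg (x := x) (s := B)]
  refine le_of_forall_pos_le_add fun η hη ↦ ?_
  have hε_η : (1 + 4 * M) * min ρ (η / (1 + 4 * M)) ≤ η := by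
    rw [← le_div_iff₀' (by positivity)]; exact min_le_right _ _
  linarith [happrox (min ρ (η / (1 + 4 * M))) (lt_min hρ_pos (by positivity)) (min_le_left _ _)]

lemma propT_of_infDist_inter_le (hx0 : x0 ∈ A ∩ B) {K δ : ℝ} (hK : 0 < K) (hδ : 0 < δ)
    (h : ∀ x ∈ ball x0 δ, infDist x (A ∩ B) ≤ K * (infDist x A + infDist x B)) :
    PropT A B x0 (δ / 2) (K + 2) := by
  have hr : 0 < δ / 2 / (2 * (1 + 2 * (K + 2))) := by positivity
  refine ⟨⟨x0, hx0.1, mem_ball_self hr⟩, ⟨x0, hx0.2, mem_ball_self hr⟩, ?_⟩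
  rintro xA ⟨hxA, hxA_near⟩ xB ⟨hxB, -⟩ hne
  have hdist : 0 < dist xA xB := dist_pos.2 hne
  have hxA_ball : xA ∈ ball x0 δ := closedBall_subset_ball (half_lt_self hδ) hxA_near
  have hinter : infDist xA (A ∩ B) < (K + 1) * dist xA xB := by
    calc infDist xA (A ∩ B) ≤ K * (infDist xA A + infDist xA B) := h xA hxA_ball
      _ ≤ K * dist xA xB := by
          rw [infDist_zero_of_mem hxA, zero_add]; gcongr; exact infDist_le_dist_of_mem hxB
      _ < (K + 1) * dist xA xB := by gcongr; linarith
  obtain ⟨w, hw, hxA_w⟩ := (infDist_lt_iff ⟨x0, hx0⟩).1 hinter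
  refine ⟨dist xA xB, hdist, w, hw.1, w, hw.2, by linarith, ?_, by simp⟩
  linarith [dist_triangle_left xB w xA]

end PropT

theorem stmt3 {X : Type*} [MetricSpace X] [CompleteSpace X]
    {A B : Set X} (hA : IsClosed A) (hB : IsClosed B) {xbar : X} (hx : xbar ∈ A ∩ B) :
    (∃ δ > 0, ∃ M > 0, PropT A B xbar δ M) ↔ Subtrans A B xbar := by
  rw [subtrans_iff_infDist ⟨xbar, hx⟩]
  constructor
  · rintro ⟨δ, hδ, M, hM, hT⟩
    exact ⟨1 + 2 * M, by positivity, δ / (4 * (1 + 2 * M)), by positivity,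
      fun x hx' ↦ hT.infDist_inter_le hA hB hM hx (mem_ball.1 hx')⟩
  · rintro ⟨K, hK, δ, hδ, h⟩
    exact ⟨δ / 2, by positivity, K + 2, by positivity, propT_of_infDist_inter_le hx hK hδ h⟩
end

section
/- Let A and B be closed subsets of a metric space X and let x̄ ∈ A ∩ B. Then A and B are tangentially transversal at x̄ if and only if there exist δ > 0 and ζ > 0 such that for any two different points x^A ∈ B̄_δ(x̄) ∩ A and x^B ∈ B̄_δ(x̄) ∩ B, there exist sequences {x_m^A} ⊂ A and {x_m^B} ⊂ B converging to x^A and x^B respectively, such that for all m: d(x_m^A, x_m^B) ≤ d(x^A, x^B) − ζ·max{d(x_m^A, x^A), d(x_m^B, x^B)} and max{d(x_m^A, x^A), d(x_m^B, x^B)} > 0. -/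
open Metric Set

/-- Tangential transversality of closed sets `A`, `B` at a point `x0 ∈ A ∩ B`. -/
def TangTrans {X : Type*} [MetricSpace X] (A B : Set X) (x0 : X) : Prop :=
  ∃ M > 0, ∃ δ > 0, ∃ η > 0,
    ∀ xA ∈ Metric.closedBall x0 δ ∩ A, ∀ xB ∈ Metric.closedBall x0 δ ∩ B, xA ≠ xB →
      ∃ t : ℕ → ℝ, ∃ xa : ℕ → X, ∃ xb : ℕ → X,
        (∀ m, 0 < t m) ∧ Filter.Tendsto t Filter.atTop (nhds 0) ∧
        (∀ m, xa m ∈ A) ∧ (∀ m, xb m ∈ B) ∧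
        ∀ m, dist (xa m) xA ≤ t m * M ∧ dist (xb m) xB ≤ t m * M ∧
          dist (xa m) (xb m) ≤ dist xA xB - t m * η

theorem stmt5 {X : Type*} [MetricSpace X]
    {A B : Set X} (hA : IsClosed A) (hB : IsClosed B) {xbar : X} (hx : xbar ∈ A ∩ B) :
    TangTrans A B xbar ↔
      ∃ δ > 0, ∃ ζ > 0,
        ∀ xA ∈ Metric.closedBall xbar δ ∩ A, ∀ xB ∈ Metric.closedBall xbar δ ∩ B, xA ≠ xB →
          ∃ xa : ℕ → X, ∃ xb : ℕ → X,
            (∀ m, xa m ∈ A) ∧ (∀ m, xb m ∈ B) ∧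
            Filter.Tendsto xa Filter.atTop (nhds xA) ∧
            Filter.Tendsto xb Filter.atTop (nhds xB) ∧
            ∀ m, dist (xa m) (xb m) ≤
                dist xA xB - ζ * max (dist (xa m) xA) (dist (xb m) xB) ∧
              0 < max (dist (xa m) xA) (dist (xb m) xB) := by
  constructor
  · rintro ⟨M, hM, δ, hδ, η, hη, H⟩
    refine ⟨δ, hδ, η / M, div_pos hη hM, ?_⟩
    intro xA hxA xB hxB hne
    obtain ⟨t, xa, xb, ht, ht0, hxa, hxb, hm⟩ := H xA hxA xB hxB hne
    refine ⟨xa, xb, hxa, hxb, ?_, ?_, ?_⟩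
    · rw [tendsto_iff_dist_tendsto_zero]
      refine squeeze_zero (fun m => dist_nonneg) (fun m => (hm m).1) ?_
      simpa using ht0.mul_const M
    · rw [tendsto_iff_dist_tendsto_zero]
      refine squeeze_zero (fun m => dist_nonneg) (fun m => (hm m).2.1) ?_
      simpa using ht0.mul_const M
    · intro m
      obtain ⟨h1, h2, h3⟩ := hm m
      constructor
      · have key : η / M * max (dist (xa m) xA) (dist (xb m) xB) ≤ t m * η := by
          rw [div_mul_eq_mul_div, div_le_iff₀ hM]
          have hle : max (dist (xa m) xA) (dist (xb m) xB) ≤ t m * M := max_le h1 h2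
          calc η * max (dist (xa m) xA) (dist (xb m) xB) ≤ η * (t m * M) :=
                mul_le_mul_of_nonneg_left hle hη.le
            _ = t m * η * M := by ring
        linarith
      · by_contra h
        push_neg at h
        have h0 : max (dist (xa m) xA) (dist (xb m) xB) = 0 :=
          le_antisymm h (le_max_of_le_left dist_nonneg)
        have ha : dist (xa m) xA = 0 := le_antisymm ((le_max_left _ _).trans h0.le) dist_nonneg
        have hb : dist (xb m) xB = 0 := le_antisymm ((le_max_right _ _).trans h0.le) dist_nonneg
        rw [dist_eq_zero] at ha hb
        rw [ha, hb] at h3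
        simp at h3
        nlinarith [ht m]
  · rintro ⟨δ, hδ, ζ, hζ, H⟩
    refine ⟨1, one_pos, δ, hδ, ζ, hζ, ?_⟩
    intro xA hxA xB hxB hne
    obtain ⟨xa, xb, hxa, hxb, hta, htb, hm⟩ := H xA hxA xB hxB hne
    refine ⟨fun m => max (dist (xa m) xA) (dist (xb m) xB), xa, xb,
      fun m => (hm m).2, ?_, hxa, hxb, ?_⟩
    · have h1 : Filter.Tendsto (fun m => dist (xa m) xA) Filter.atTop (nhds 0) :=
        tendsto_iff_dist_tendsto_zero.mp hta
      have h2 : Filter.Tendsto (fun m => dist (xb m) xB) Filter.atTop (nhds 0) :=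
        tendsto_iff_dist_tendsto_zero.mp htb
      simpa using h1.max h2

    · intro m
      refine ⟨by simpa using le_max_left _ _, by simpa using le_max_right _ _, ?_⟩
      have := (hm m).1
      linarith [this, mul_comm ζ (max (dist (xa m) xA) (dist (xb m) xB))]
end

section
/- Let A and B be closed subsets of a Banach space X and let x̄ ∈ A ∩ B. Then A and B are transversal at x̄ if and only if there exist δ > 0 and M > 0 such that for any a ∈ B_δ(0) and b ∈ B_δ(0), any x^A ∈ A ∩ B_δ(x̄ + a) and x^B ∈ B ∩ B_δ(x̄ + b) with x^A − a ≠ x^B − b, there exist θ > 0, x̂^A ∈ A and x̂^B ∈ B such that ‖x^A − x̂^A‖ ≤ θM, ‖x^B − x̂^B‖ ≤ θM and ‖x̂^A − x̂^B − (a − b)‖ ≤ ‖x^A − x^B − (a − b)‖ − θ. -/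
open Metric Set
open scoped ENNReal

/-- Transversality of closed sets `A`, `B` at a point `x0 ∈ A ∩ B`: the subtransversality
inequality holds uniformly for all small translations of both sets. -/
def Transversal {X : Type*} [NormedAddCommGroup X] (A B : Set X) (x0 : X) : Prop :=
  ∃ K > 0, ∃ δ > 0, ∀ a ∈ Metric.ball (0 : X) δ, ∀ b ∈ Metric.ball (0 : X) δ,
    ∀ x ∈ Metric.ball x0 δ,
      EMetric.infEdist x (((· - a) '' A) ∩ ((· - b) '' B)) ≤
        ENNReal.ofReal K *
          (EMetric.infEdist x ((· - a) '' A) + EMetric.infEdist x ((· - b) '' B))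

open Filter in
private lemma ekeland_aux {Y : Type*} [MetricSpace Y] [CompleteSpace Y]
    (f : Y → ℝ) (hf : Continuous f) (hf0 : ∀ y, 0 ≤ f y)
    {lam : ℝ} (hlam : 0 < lam) (y0 : Y) :
    ∃ y, f y ≤ f y0 ∧ lam * dist y0 y ≤ f y0 ∧ ∀ z, f y ≤ f z + lam * dist y z := by
  classical
  set F : Y → Set Y := fun y => {z | f z + lam * dist y z ≤ f y} with hFdef
  have hmem : ∀ y, y ∈ F y := by intro y; simp [hFdef, dist_self]
  have hsub : ∀ y z, z ∈ F y → F z ⊆ F y := by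
    intro y z hz w hw
    have hz' : f z + lam * dist y z ≤ f y := hz
    have hw' : f w + lam * dist z w ≤ f z := hw
    have htri : dist y w ≤ dist y z + dist z w := dist_triangle y z w
    have := mul_le_mul_of_nonneg_left htri hlam.le
    show f w + lam * dist y w ≤ f y
    nlinarith
  have hbdd : ∀ y, BddBelow (f '' F y) := fun y => ⟨0, by rintro _ ⟨z, _, rfl⟩; exact hf0 z⟩
  have hstep : ∀ n : ℕ, ∀ y : Y, ∃ z, z ∈ F y ∧ f z < sInf (f '' F y) + (1/2 : ℝ)^n := by
    intro n y
    have hne : (f '' F y).Nonempty := ⟨f y, y, hmem y, rfl⟩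
    obtain ⟨_, ⟨z, hz, rfl⟩, hlt⟩ := Real.lt_sInf_add_pos hne (by positivity : (0:ℝ) < (1/2)^n)
    exact ⟨z, hz, hlt⟩
  choose! g hg1 hg2 using hstep
  set y : ℕ → Y := fun n => Nat.rec y0 (fun n yn => g n yn) n with hydef
  have hysucc : ∀ n, y (n+1) = g n (y n) := fun _ => rfl
  have hchain : ∀ n, y (n+1) ∈ F (y n) := fun n => hg1 n (y n)
  have hFmono : ∀ m n, m ≤ n → F (y n) ⊆ F (y m) := by
    intro m n h
    induction n, h using Nat.le_induction with
    | base => exact fun _ h => h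
    | succ n hmn ih => exact fun w hw => ih (hsub _ _ (hchain n) hw)
  have hkey : ∀ n, ∀ z ∈ F (y (n+1)), lam * dist (y (n+1)) z ≤ (1/2 : ℝ)^n := by
    intro n z hz
    have hz' : z ∈ F (y n) := hsub _ _ (hchain n) hz
    have h1 : sInf (f '' F (y n)) ≤ f z := csInf_le (hbdd _) ⟨z, hz', rfl⟩
    have h2 : f (y (n+1)) < sInf (f '' F (y n)) + (1/2 : ℝ)^n := by
      rw [hysucc]; exact hg2 n (y n)
    have h3 : f z + lam * dist (y (n+1)) z ≤ f (y (n+1)) := hz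
    linarith
  set C : ℝ := max (dist (y 0) (y 1)) (2/lam) with hCdef
  have hcauchy : CauchySeq y := by
    apply cauchySeq_of_le_geometric (1/2 : ℝ) C (by norm_num)
    intro n
    match n with
    | 0 =>
      rw [pow_zero, mul_one]
      exact le_max_left _ _
    | (m+1) =>
      have h := hkey m (y (m+2)) (hchain (m+1))
      have hC2 : (2/lam) ≤ C := le_max_right _ _
      have hp : (0:ℝ) < (1/2:ℝ)^(m+1) := by positivity
      have hd : dist (y (m+1)) (y (m+2)) ≤ (2/lam) * (1/2)^(m+1) := by
        rw [div_mul_eq_mul_div, le_div_iff₀ hlam]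
        calc dist (y (m+1)) (y (m+2)) * lam = lam * dist (y (m+1)) (y (m+2)) := by ring
          _ ≤ (1/2:ℝ)^m := h
          _ = 2 * (1/2)^(m+1) := by ring
      exact hd.trans (mul_le_mul_of_nonneg_right hC2 hp.le)
  obtain ⟨yl, hyl⟩ := cauchySeq_tendsto_of_complete hcauchy
  have hFcl : ∀ n, IsClosed (F (y n)) :=
    fun n => isClosed_le (hf.add (continuous_const.mul (continuous_const.dist continuous_id))) continuous_const
  have hmemlim : ∀ n, yl ∈ F (y n) := fun n =>
    (hFcl n).mem_of_tendsto hyl (Filter.eventually_atTop.2 ⟨n, fun m hm => hFmono n m hm (hmem _)⟩)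
  refine ⟨yl, ?_, ?_, ?_⟩
  · have h0 : f yl + lam * dist (y 0) yl ≤ f (y 0) := hmemlim 0
    have hy00 : y 0 = y0 := rfl
    rw [hy00] at h0
    have := mul_nonneg hlam.le (dist_nonneg (x := y0) (y := yl))
    linarith
  · have h0 : f yl + lam * dist (y 0) yl ≤ f (y 0) := hmemlim 0
    have hy00 : y 0 = y0 := rfl
    rw [hy00] at h0
    have := hf0 yl
    linarith
  · intro z
    by_contra hcon
    push_neg at hcon
    have hzF : z ∈ F yl := le_of_lt hcon
    have hd : ∀ n, lam * dist (y (n+1)) z ≤ (1/2:ℝ)^n :=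
      fun n => hkey n z (hsub _ _ (hmemlim (n+1)) hzF)
    have hten : Tendsto (fun n => dist (y (n+1)) z) atTop (nhds (dist yl z)) :=
      (hyl.comp (tendsto_add_atTop_nat 1)).dist tendsto_const_nhds
    have hten2 : Tendsto (fun n : ℕ => (1/2:ℝ)^n / lam) atTop (nhds 0) := by
      have h := tendsto_pow_atTop_nhds_zero_of_lt_one (by norm_num : (0:ℝ) ≤ 1/2) (by norm_num : (1/2:ℝ) < 1)
      simpa using h.div_const lam
    have hle : dist yl z ≤ 0 := le_of_tendsto_of_tendsto' hten hten2 (fun n => by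
      rw [le_div_iff₀ hlam]
      have := hd n
      linarith)
    have hze : z = yl := by
      have h0 : dist yl z = 0 := le_antisymm hle dist_nonneg
      exact (dist_eq_zero.mp h0).symm
    rw [hze, dist_self] at hcon
    simp at hcon

set_option maxHeartbeats 1000000 in
theorem stmt6 {X : Type*} [NormedAddCommGroup X] [NormedSpace ℝ X] [CompleteSpace X]
    {A B : Set X} (hA : IsClosed A) (hB : IsClosed B) {xbar : X} (hx : xbar ∈ A ∩ B) :
    Transversal A B xbar ↔
      ∃ δ > 0, ∃ M > 0, ∀ a ∈ Metric.ball (0 : X) δ, ∀ b ∈ Metric.ball (0 : X) δ,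
        ∀ xA ∈ A ∩ Metric.ball (xbar + a) δ, ∀ xB ∈ B ∩ Metric.ball (xbar + b) δ,
          xA - a ≠ xB - b →
          ∃ θ > 0, ∃ xA' ∈ A, ∃ xB' ∈ B,
            ‖xA - xA'‖ ≤ θ * M ∧ ‖xB - xB'‖ ≤ θ * M ∧
            ‖xA' - xB' - (a - b)‖ ≤ ‖xA - xB - (a - b)‖ - θ := by
  constructor
  · rintro ⟨K, hK, δ, hδ, H⟩
    refine ⟨δ, hδ, K + 2, by linarith, ?_⟩
    rintro a ha b hb xA ⟨hxA, hxAb⟩ xB ⟨hxB, hxBb⟩ hne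
    have hd0 : xA - xB - (a - b) ≠ 0 := by
      intro h
      apply hne
      have h2 : (xA - a) - (xB - b) = 0 := by rw [← h]; abel
      exact sub_eq_zero.mp h2
    set r := ‖xA - xB - (a - b)‖ with hrdef
    have hr : 0 < r := norm_pos_iff.mpr hd0
    set x := (2⁻¹ : ℝ) • ((xA - a) + (xB - b)) with hxdef
    have n1 : ‖x - (xA - a)‖ = r / 2 := by
      have e1 : x - (xA - a) = (2⁻¹:ℝ) • (-(xA - xB - (a - b))) := by rw [hxdef]; module
      rw [e1, norm_smul, norm_neg, Real.norm_eq_abs, ← hrdef]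
      rw [abs_of_pos (by norm_num : (0:ℝ) < 2⁻¹)]
      ring
    have n2 : ‖x - (xB - b)‖ = r / 2 := by
      have e2 : x - (xB - b) = (2⁻¹:ℝ) • (xA - xB - (a - b)) := by rw [hxdef]; module
      rw [e2, norm_smul, Real.norm_eq_abs, ← hrdef]
      rw [abs_of_pos (by norm_num : (0:ℝ) < 2⁻¹)]
      ring
    have hxball : x ∈ ball xbar δ := by
      rw [mem_ball, dist_eq_norm]
      have e3 : x - xbar = (2⁻¹:ℝ) • ((xA - (xbar + a)) + (xB - (xbar + b))) := by
        rw [hxdef]; module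
      have h1 : ‖xA - (xbar + a)‖ < δ := by rw [mem_ball, dist_eq_norm] at hxAb; exact hxAb
      have h2 : ‖xB - (xbar + b)‖ < δ := by rw [mem_ball, dist_eq_norm] at hxBb; exact hxBb
      have h3 := norm_add_le (xA - (xbar + a)) (xB - (xbar + b))
      rw [e3, norm_smul, Real.norm_eq_abs, abs_of_pos (by norm_num : (0:ℝ) < 2⁻¹)]
      nlinarith
    have key := H a ha b hb x hxball
    have hiA : EMetric.infEdist x ((· - a) '' A) ≤ ENNReal.ofReal (r/2) := by
      refine le_trans (EMetric.infEdist_le_edist_of_mem ⟨xA, hxA, rfl⟩) ?_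
      rw [edist_dist, dist_eq_norm, n1]
    have hiB : EMetric.infEdist x ((· - b) '' B) ≤ ENNReal.ofReal (r/2) := by
      refine le_trans (EMetric.infEdist_le_edist_of_mem ⟨xB, hxB, rfl⟩) ?_
      rw [edist_dist, dist_eq_norm, n2]
    have hsum : ENNReal.ofReal K *
        (EMetric.infEdist x ((· - a) '' A) + EMetric.infEdist x ((· - b) '' B))
        ≤ ENNReal.ofReal (K * r) := by
      calc ENNReal.ofReal K * (EMetric.infEdist x ((· - a) '' A) + EMetric.infEdist x ((· - b) '' B))
          ≤ ENNReal.ofReal K * (ENNReal.ofReal (r/2) + ENNReal.ofReal (r/2)) := by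
            gcongr
        _ = ENNReal.ofReal (K * r) := by
            rw [← ENNReal.ofReal_add (by positivity) (by positivity),
              ← ENNReal.ofReal_mul hK.le]
            norm_num
    have hlt : EMetric.infEdist x (((· - a) '' A) ∩ ((· - b) '' B)) <
        ENNReal.ofReal ((K + 1) * r) := by
      refine lt_of_le_of_lt (key.trans hsum) ?_
      rw [ENNReal.ofReal_lt_ofReal_iff (by positivity)]
      nlinarith
    obtain ⟨z, hzmem, hz⟩ := EMetric.infEdist_lt_iff.mp hlt
    obtain ⟨⟨zA, hzA, hzAe⟩, ⟨zB, hzB, hzBe⟩⟩ := hzmem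
    simp only at hzAe hzBe
    have hzdist : ‖x - z‖ < (K + 1) * r := by
      rw [edist_dist] at hz
      rw [← dist_eq_norm]
      exact (ENNReal.ofReal_lt_ofReal_iff_of_nonneg dist_nonneg).mp hz
    refine ⟨r, hr, zA, hzA, zB, hzB, ?_, ?_, ?_⟩
    · have exa : xA - zA = ((xA - a) - x) + (x - z) := by rw [← hzAe]; abel
      calc ‖xA - zA‖ ≤ ‖(xA - a) - x‖ + ‖x - z‖ := by rw [exa]; exact norm_add_le _ _
        _ = ‖x - (xA - a)‖ + ‖x - z‖ := by rw [norm_sub_rev]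
        _ ≤ r * (K + 2) := by rw [n1]; nlinarith
    · have exb : xB - zB = ((xB - b) - x) + (x - z) := by rw [← hzBe]; abel
      calc ‖xB - zB‖ ≤ ‖(xB - b) - x‖ + ‖x - z‖ := by rw [exb]; exact norm_add_le _ _
        _ = ‖x - (xB - b)‖ + ‖x - z‖ := by rw [norm_sub_rev]
        _ ≤ r * (K + 2) := by rw [n2]; nlinarith
    · have hz0 : zA - zB - (a - b) = 0 := by
        have e : zA - zB - (a - b) = (zA - a) - (zB - b) := by abel
        rw [e, hzAe, hzBe, sub_self]
      rw [hz0, norm_zero]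
      simp
  · rintro ⟨δ, hδ, M, hM, H⟩
    refine ⟨2*M + 1, by linarith, δ/(12*M + 4), by positivity, ?_⟩
    intro a ha b hb x hxb
    set δ' := δ/(12*M + 4) with hδ'def
    have hδ' : 0 < δ' := by positivity
    have hδ'mul : (12*M + 4) * δ' = δ := by
      rw [hδ'def]; field_simp
    have hδ'le : δ' ≤ δ := by nlinarith
    have ha' : ‖a‖ < δ' := by rwa [mem_ball, dist_zero_right] at ha
    have hb' : ‖b‖ < δ' := by rwa [mem_ball, dist_zero_right] at hb
    have hx' : ‖x - xbar‖ < δ' := by rwa [mem_ball, dist_eq_norm] at hxb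
    -- finiteness and real distances
    have hEA : EMetric.infEdist x ((· - a) '' A) ≤ ENNReal.ofReal (‖x - (xbar - a)‖) := by
      refine le_trans (EMetric.infEdist_le_edist_of_mem ⟨xbar, hx.1, rfl⟩) ?_
      rw [edist_dist, dist_eq_norm]
    have hEB : EMetric.infEdist x ((· - b) '' B) ≤ ENNReal.ofReal (‖x - (xbar - b)‖) := by
      refine le_trans (EMetric.infEdist_le_edist_of_mem ⟨xbar, hx.2, rfl⟩) ?_
      rw [edist_dist, dist_eq_norm]
    have hfinA : EMetric.infEdist x ((· - a) '' A) ≠ ⊤ :=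
      (lt_of_le_of_lt hEA ENNReal.ofReal_lt_top).ne
    have hfinB : EMetric.infEdist x ((· - b) '' B) ≠ ⊤ :=
      (lt_of_le_of_lt hEB ENNReal.ofReal_lt_top).ne
    set dA := (EMetric.infEdist x ((· - a) '' A)).toReal with hdAdef
    set dB := (EMetric.infEdist x ((· - b) '' B)).toReal with hdBdef
    have hdA0 : 0 ≤ dA := ENNReal.toReal_nonneg
    have hdB0 : 0 ≤ dB := ENNReal.toReal_nonneg
    have hEAeq : EMetric.infEdist x ((· - a) '' A) = ENNReal.ofReal dA :=
      (ENNReal.ofReal_toReal hfinA).symm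
    have hEBeq : EMetric.infEdist x ((· - b) '' B) = ENNReal.ofReal dB :=
      (ENNReal.ofReal_toReal hfinB).symm
    have hdAlt : dA < 2 * δ' := by
      have h1 : dA ≤ ‖x - (xbar - a)‖ := ENNReal.toReal_le_of_le_ofReal (norm_nonneg _) hEA
      have h2 : ‖x - (xbar - a)‖ ≤ ‖x - xbar‖ + ‖a‖ := by
        have : x - (xbar - a) = (x - xbar) + a := by abel
        rw [this]; exact norm_add_le _ _
      linarith
    have hdBlt : dB < 2 * δ' := by
      have h1 : dB ≤ ‖x - (xbar - b)‖ := ENNReal.toReal_le_of_le_ofReal (norm_nonneg _) hEB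
      have h2 : ‖x - (xbar - b)‖ ≤ ‖x - xbar‖ + ‖b‖ := by
        have : x - (xbar - b) = (x - xbar) + b := by abel
        rw [this]; exact norm_add_le _ _
      linarith
    -- reduce to ε-approximation
    refine ENNReal.le_of_forall_pos_le_add ?_
    intro ε hε _
    set εr : ℝ := min δ' ((ε : ℝ) / (4*M + 1)) with hεrdef
    have hεr : 0 < εr := by
      apply lt_min hδ'
      positivity
    have hεrδ' : εr ≤ δ' := min_le_left _ _
    have hεrε : (4*M + 1) * εr ≤ (ε : ℝ) := by
      have h1 : εr ≤ (ε : ℝ) / (4*M + 1) := min_le_right _ _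
      have h2 : (0:ℝ) < 4*M + 1 := by linarith
      calc (4*M + 1) * εr ≤ (4*M + 1) * ((ε : ℝ) / (4*M + 1)) := by nlinarith
        _ = (ε : ℝ) := by field_simp
    -- pick approximate nearest points
    have hpickA : ∃ u0 ∈ A, dist x (u0 - a) < dA + εr := by
      have hlt : EMetric.infEdist x ((· - a) '' A) < ENNReal.ofReal (dA + εr) := by
        rw [hEAeq, ENNReal.ofReal_lt_ofReal_iff (by linarith)]
        linarith
      obtain ⟨p, hpmem, hp⟩ := EMetric.infEdist_lt_iff.mp hlt
      obtain ⟨u0, hu0, hu0e⟩ := hpmem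
      refine ⟨u0, hu0, ?_⟩
      rw [edist_dist] at hp
      have := (ENNReal.ofReal_lt_ofReal_iff_of_nonneg dist_nonneg).mp hp
      simp only at hu0e
      rwa [hu0e]
    have hpickB : ∃ v0 ∈ B, dist x (v0 - b) < dB + εr := by
      have hlt : EMetric.infEdist x ((· - b) '' B) < ENNReal.ofReal (dB + εr) := by
        rw [hEBeq, ENNReal.ofReal_lt_ofReal_iff (by linarith)]
        linarith
      obtain ⟨p, hpmem, hp⟩ := EMetric.infEdist_lt_iff.mp hlt
      obtain ⟨v0, hv0, hv0e⟩ := hpmem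
      refine ⟨v0, hv0, ?_⟩
      rw [edist_dist] at hp
      have := (ENNReal.ofReal_lt_ofReal_iff_of_nonneg dist_nonneg).mp hp
      simp only at hv0e
      rwa [hv0e]
    obtain ⟨u0, hu0A, hu0d⟩ := hpickA
    obtain ⟨v0, hv0B, hv0d⟩ := hpickB
    -- set up Ekeland on A ×ˢ B
    have hScl : IsClosed (A ×ˢ B) := hA.prod hB
    haveI : CompleteSpace (A ×ˢ B : Set (X × X)) := hScl.completeSpace_coe
    set f : (A ×ˢ B : Set (X × X)) → ℝ := fun p => ‖(p : X × X).1 - (p : X × X).2 - (a - b)‖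
      with hfdef
    have hfc : Continuous f := by
      apply Continuous.norm
      exact ((continuous_subtype_val.fst).sub (continuous_subtype_val.snd)).sub continuous_const
    have hy0mem : (u0, v0) ∈ A ×ˢ B := ⟨hu0A, hv0B⟩
    set lam : ℝ := 1/(2*M) with hlamdef
    have hlam : 0 < lam := by positivity
    obtain ⟨ystar, h1, h2, h3⟩ := ekeland_aux f hfc (fun y => norm_nonneg _) hlam
      ⟨(u0, v0), hy0mem⟩
    set u := (ystar : X × X).1 with hudef
    set v := (ystar : X × X).2 with hvdef
    have huA : u ∈ A := ystar.2.1
    have hvB : v ∈ B := ystar.2.2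
    set r0 : ℝ := ‖u0 - v0 - (a - b)‖ with hr0def
    have hfy0 : f ⟨(u0, v0), hy0mem⟩ = r0 := rfl
    have hr0le : r0 ≤ dA + dB + 2 * εr := by
      have e : u0 - v0 - (a - b) = ((u0 - a) - x) + (x - (v0 - b)) := by abel
      rw [hr0def, e]
      have := norm_add_le ((u0 - a) - x) (x - (v0 - b))
      rw [norm_sub_rev (u0 - a) x] at this
      rw [dist_eq_norm] at hu0d hv0d
      linarith
    have hr0nn : 0 ≤ r0 := norm_nonneg _
    have hdist : dist (⟨(u0, v0), hy0mem⟩ : (A ×ˢ B : Set (X × X))) ystar ≤ 2 * M * r0 := by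
      rw [hfy0] at h2
      have h := mul_le_mul_of_nonneg_left h2 (by positivity : (0:ℝ) ≤ 2*M)
      have he : 2*M*(lam * dist (⟨(u0, v0), hy0mem⟩ : (A ×ˢ B : Set (X × X))) ystar)
          = dist (⟨(u0, v0), hy0mem⟩ : (A ×ˢ B : Set (X × X))) ystar := by
        rw [hlamdef]; field_simp
      rw [he] at h
      exact h
    have hdistmax : dist (u0, v0) (ystar : X × X) ≤ 2 * M * r0 := by
      rwa [Subtype.dist_eq] at hdist
    have hdu : ‖u0 - u‖ ≤ 2 * M * r0 := by
      have := le_max_left (dist u0 u) (dist v0 v)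
      rw [Prod.dist_eq] at hdistmax
      rw [← dist_eq_norm]
      exact le_trans (le_max_left _ _) hdistmax
    have hdv : ‖v0 - v‖ ≤ 2 * M * r0 := by
      rw [Prod.dist_eq] at hdistmax
      rw [← dist_eq_norm]
      exact le_trans (le_max_right _ _) hdistmax
    have hfystar : f ystar = ‖u - v - (a - b)‖ := rfl
    have hr06 : r0 ≤ 6 * δ' := by linarith
    have h2Mr0 : 2 * M * r0 ≤ 12 * M * δ' := by
      have := mul_le_mul_of_nonneg_left hr06 (by positivity : (0:ℝ) ≤ 2*M)
      linarith
    -- show u - a = v - b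
    have hne : u - a = v - b := by
      by_contra hne
      have haδ : a ∈ ball (0:X) δ := by rw [mem_ball, dist_zero_right]; linarith
      have hbδ : b ∈ ball (0:X) δ := by rw [mem_ball, dist_zero_right]; linarith
      have huball : u ∈ ball (xbar + a) δ := by
        rw [mem_ball, dist_eq_norm]
        have e : u - (xbar + a) = -(u0 - u) + ((u0 - a) - x) + (x - xbar) := by abel
        have h4 := norm_add_le (-(u0 - u) + ((u0 - a) - x)) (x - xbar)
        have h5 := norm_add_le (-(u0 - u)) ((u0 - a) - x)
        rw [norm_neg] at h5
        rw [norm_sub_rev (u0 - a) x] at h5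
        rw [dist_eq_norm] at hu0d
        rw [e]
        have h6 : ‖x - (u0 - a)‖ < dA + εr := hu0d
        have h7 := norm_add_le (-(u0 - u)) ((u0 - a) - x)
        linarith
      have hvball : v ∈ ball (xbar + b) δ := by
        rw [mem_ball, dist_eq_norm]
        have e : v - (xbar + b) = -(v0 - v) + ((v0 - b) - x) + (x - xbar) := by abel
        have h4 := norm_add_le (-(v0 - v) + ((v0 - b) - x)) (x - xbar)
        have h5 := norm_add_le (-(v0 - v)) ((v0 - b) - x)
        rw [norm_neg] at h5
        rw [norm_sub_rev (v0 - b) x] at h5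
        rw [dist_eq_norm] at hv0d
        rw [e]
        have h6 : ‖x - (v0 - b)‖ < dB + εr := hv0d
        linarith
      obtain ⟨θ, hθ, xA', hxA', xB', hxB', hm1, hm2, hdrop⟩ :=
        H a haδ b hbδ u ⟨huA, huball⟩ v ⟨hvB, hvball⟩ hne
      have hzmem : (xA', xB') ∈ A ×ˢ B := ⟨hxA', hxB'⟩
      have h6 := h3 ⟨(xA', xB'), hzmem⟩
      have hfz : f ⟨(xA', xB'), hzmem⟩ = ‖xA' - xB' - (a - b)‖ := rfl
      have hdz : dist ystar (⟨(xA', xB'), hzmem⟩ : (A ×ˢ B : Set (X × X))) ≤ θ * M := by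
        rw [Subtype.dist_eq, Prod.dist_eq]
        apply max_le
        · rw [dist_eq_norm]; exact hm1
        · rw [dist_eq_norm]; exact hm2
      have hlamdz : lam * dist ystar (⟨(xA', xB'), hzmem⟩ : (A ×ˢ B : Set (X × X))) ≤ θ / 2 := by
        rw [hlamdef]
        calc 1/(2*M) * dist ystar (⟨(xA', xB'), hzmem⟩ : (A ×ˢ B : Set (X × X)))
            ≤ 1/(2*M) * (θ * M) := by
              apply mul_le_mul_of_nonneg_left hdz (by positivity)
          _ = θ / 2 := by field_simp
      linarith
    -- conclude
    have hzmem : u - a ∈ ((· - a) '' A) ∩ ((· - b) '' B) :=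
      ⟨⟨u, huA, rfl⟩, ⟨v, hvB, hne.symm⟩⟩
    have hfinal : dist x (u - a) ≤ (2*M + 1) * (dA + dB) + (4*M + 1) * εr := by
      have h7 : dist x (u - a) ≤ dist x (u0 - a) + dist (u0 - a) (u - a) := dist_triangle _ _ _
      have h8 : dist (u0 - a) (u - a) = ‖u0 - u‖ := by
        rw [dist_eq_norm]
        congr 1
        abel
      rw [h8] at h7
      have h9 : 2 * M * r0 ≤ 2 * M * (dA + dB + 2 * εr) :=
        mul_le_mul_of_nonneg_left hr0le (by positivity)
      linarith
    calc EMetric.infEdist x (((· - a) '' A) ∩ ((· - b) '' B))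
        ≤ edist x (u - a) := EMetric.infEdist_le_edist_of_mem hzmem
      _ = ENNReal.ofReal (dist x (u - a)) := edist_dist _ _
      _ ≤ ENNReal.ofReal ((2*M + 1) * (dA + dB) + (4*M + 1) * εr) :=
          ENNReal.ofReal_le_ofReal hfinal
      _ ≤ ENNReal.ofReal ((2*M + 1) * (dA + dB)) + ENNReal.ofReal ((4*M + 1) * εr) :=
          ENNReal.ofReal_add_le
      _ ≤ ENNReal.ofReal (2*M + 1) *
            (EMetric.infEdist x ((· - a) '' A) + EMetric.infEdist x ((· - b) '' B)) + ↑ε := by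
          gcongr
          · rw [ENNReal.ofReal_mul (by linarith : (0:ℝ) ≤ 2*M + 1),
              ENNReal.ofReal_add hdA0 hdB0, hEAeq, hEBeq]
          · calc ENNReal.ofReal ((4*M + 1) * εr) ≤ ENNReal.ofReal (ε : ℝ) :=
                ENNReal.ofReal_le_ofReal hεrε
              _ = ↑ε := ENNReal.ofReal_coe_nnreal
end

section
/- Let A and B be closed subsets of a Banach space X and let x̄ ∈ A ∩ B. Then A and B are transversal at x̄ if and only if there exist δ > 0 and M > 0 such that for any a ∈ B_δ(0) and b ∈ B_δ(0), any x^A ∈ A ∩ B_δ(x̄ + a) and x^B ∈ B ∩ B_δ(x̄ + b) with x^A − a ≠ x^B − b, there exist a sequence of positive reals t_m tending to 0 and sequences {x_m^A} ⊂ A, {x_m^B} ⊂ B such that for all m: ‖x_m^A − x^A‖ ≤ t_m M, ‖x_m^B − x^B‖ ≤ t_m M and ‖x_m^A − x_m^B − (a − b)‖ ≤ ‖x^A − x^B − (a − b)‖ − t_m. -/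
set_option maxHeartbeats 1600000

open Metric Set
open scoped ENNReal

open Filter in

/-- Descent lemma: if from every reachable pair `(p,q) ∈ A × B` with `p - q ≠ c` we can
decrease `‖p - q - c‖` by `t` while moving at most `t * M`, then there is a pair with
`p - q = c` within distance `M * ‖p₀ - q₀ - c‖` of the starting pair. -/
theorem descent_aux {X : Type*} [NormedAddCommGroup X] [CompleteSpace X]
    {A B : Set X} (hA : IsClosed A) (hB : IsClosed B) {M : ℝ} (hM : 0 < M) {c : X}
    {p₀ q₀ : X} (hp₀ : p₀ ∈ A) (hq₀ : q₀ ∈ B)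
    (H : ∀ p ∈ A, ∀ q ∈ B, ‖p - p₀‖ ≤ M * ‖p₀ - q₀ - c‖ → ‖q - q₀‖ ≤ M * ‖p₀ - q₀ - c‖ →
      p - q ≠ c → ∃ t > 0, ∃ p' ∈ A, ∃ q' ∈ B, ‖p' - p‖ ≤ t * M ∧ ‖q' - q‖ ≤ t * M ∧
        ‖p' - q' - c‖ ≤ ‖p - q - c‖ - t) :
    ∃ p ∈ A, ∃ q ∈ B, p - q = c ∧ ‖p - p₀‖ ≤ M * ‖p₀ - q₀ - c‖ ∧
      ‖q - q₀‖ ≤ M * ‖p₀ - q₀ - c‖ := by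
  classical
  set f : X × X → ℝ := fun z => ‖z.1 - z.2 - c‖ with hf
  have hf0 : ∀ z, 0 ≤ f z := fun z => norm_nonneg _
  set T : X × X → Set ℝ := fun z =>
    {t : ℝ | 0 < t ∧ ∃ p' ∈ A, ∃ q' ∈ B, ‖p' - z.1‖ ≤ t * M ∧ ‖q' - z.2‖ ≤ t * M ∧
      f (p', q') ≤ f z - t} with hT
  have hTbdd : ∀ z, BddAbove (T z) := by
    intro z
    refine ⟨f z, fun t ht => ?_⟩
    obtain ⟨ht0, p', _, q', _, _, _, hdec⟩ := ht
    have := hf0 (p', q')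
    linarith
  -- choose a near-supremal step
  have hstep : ∀ z : X × X, ∃ w : X × X,
      (z.1 ∈ A ∧ z.2 ∈ B ∧ (T z).Nonempty) →
      w.1 ∈ A ∧ w.2 ∈ B ∧ ∃ t, sSup (T z) / 2 < t ∧ 0 < t ∧
        ‖w.1 - z.1‖ ≤ t * M ∧ ‖w.2 - z.2‖ ≤ t * M ∧ f w ≤ f z - t := by
    intro z
    by_cases h : z.1 ∈ A ∧ z.2 ∈ B ∧ (T z).Nonempty
    · obtain ⟨hzA, hzB, hne⟩ := h
      have hsup_pos : 0 < sSup (T z) := by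
        obtain ⟨t, ht⟩ := hne
        exact lt_of_lt_of_le ht.1 (le_csSup (hTbdd z) ht)
      obtain ⟨t, htT, htgt⟩ := exists_lt_of_lt_csSup hne (by linarith : sSup (T z) / 2 < sSup (T z))
      obtain ⟨ht0, p', hp'A, q', hq'B, h1, h2, h3⟩ := htT
      exact ⟨(p', q'), fun _ => ⟨hp'A, hq'B, t, htgt, ht0, h1, h2, h3⟩⟩
    · exact ⟨z, fun hc => absurd hc h⟩
  choose nxt hnxt using hstep
  set step : X × X → X × X := fun z =>
    if z.1 ∈ A ∧ z.2 ∈ B ∧ (T z).Nonempty then nxt z else z with hstepdef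
  set u : ℕ → X × X := fun n => step^[n] (p₀, q₀) with hu
  have hu0 : u 0 = (p₀, q₀) := rfl
  have husucc : ∀ n, u (n + 1) = step (u n) := by
    intro n; simp only [hu, Function.iterate_succ_apply']
  -- membership invariant
  have hmem : ∀ n, (u n).1 ∈ A ∧ (u n).2 ∈ B := by
    intro n
    induction n with
    | zero => exact ⟨hp₀, hq₀⟩
    | succ n ih =>
      rw [husucc]
      by_cases h : (u n).1 ∈ A ∧ (u n).2 ∈ B ∧ (T (u n)).Nonempty
      · simp only [hstepdef, if_pos h]
        have := hnxt (u n) h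
        exact ⟨this.1, this.2.1⟩
      · simp only [hstepdef, if_neg h]; exact ih
  -- one-step estimates
  have honestep : ∀ n, f (u (n + 1)) ≤ f (u n) ∧
      ‖(u (n + 1)).1 - (u n).1‖ ≤ M * (f (u n) - f (u (n + 1))) ∧
      ‖(u (n + 1)).2 - (u n).2‖ ≤ M * (f (u n) - f (u (n + 1))) := by
    intro n
    rw [husucc]
    by_cases h : (u n).1 ∈ A ∧ (u n).2 ∈ B ∧ (T (u n)).Nonempty
    · simp only [hstepdef, if_pos h]
      obtain ⟨-, -, t, -, ht0, h1, h2, h3⟩ := hnxt (u n) h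
      have htle : t ≤ f (u n) - f (nxt (u n)) := by linarith
      refine ⟨by linarith, ?_, ?_⟩
      · calc ‖(nxt (u n)).1 - (u n).1‖ ≤ t * M := h1
          _ ≤ (f (u n) - f (nxt (u n))) * M := by nlinarith
          _ = M * (f (u n) - f (nxt (u n))) := mul_comm _ _
      · calc ‖(nxt (u n)).2 - (u n).2‖ ≤ t * M := h2
          _ ≤ (f (u n) - f (nxt (u n))) * M := by nlinarith
          _ = M * (f (u n) - f (nxt (u n))) := mul_comm _ _
    · simp only [hstepdef, if_neg h, sub_self, norm_zero, mul_zero, sub_self]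
      exact ⟨le_refl _, by simp, by simp⟩
  have hanti : Antitone (fun n => f (u n)) :=
    antitone_nat_of_succ_le fun n => (honestep n).1
  -- telescoped estimates
  have htel : ∀ n m, n ≤ m → ‖(u m).1 - (u n).1‖ ≤ M * (f (u n) - f (u m)) ∧
      ‖(u m).2 - (u n).2‖ ≤ M * (f (u n) - f (u m)) := by
    intro n m hnm
    induction m, hnm using Nat.le_induction with
    | base => simp
    | succ m hnm ih =>
      obtain ⟨h1, h2, h3⟩ := honestep m
      constructor
      · calc ‖(u (m+1)).1 - (u n).1‖ ≤ ‖(u (m+1)).1 - (u m).1‖ + ‖(u m).1 - (u n).1‖ := by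
              have := norm_sub_le_norm_sub_add_norm_sub ((u (m+1)).1) ((u m).1) ((u n).1)
              linarith [norm_sub_le ((u (m+1)).1 - (u m).1) ((u n).1 - (u m).1)]
          _ ≤ M * (f (u m) - f (u (m+1))) + M * (f (u n) - f (u m)) := add_le_add h2 ih.1
          _ = M * (f (u n) - f (u (m+1))) := by ring
      · calc ‖(u (m+1)).2 - (u n).2‖ ≤ ‖(u (m+1)).2 - (u m).2‖ + ‖(u m).2 - (u n).2‖ := by
              have := norm_sub_le_norm_sub_add_norm_sub ((u (m+1)).2) ((u m).2) ((u n).2)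
              linarith
          _ ≤ M * (f (u m) - f (u (m+1))) + M * (f (u n) - f (u m)) := add_le_add h3 ih.2
          _ = M * (f (u n) - f (u (m+1))) := by ring
  -- limit of f
  set L : ℝ := ⨅ n, f (u n) with hL
  have hbdd : BddBelow (Set.range fun n => f (u n)) :=
    ⟨0, fun y ⟨n, hn⟩ => hn ▸ hf0 (u n)⟩
  have hLle : ∀ n, L ≤ f (u n) := fun n => ciInf_le hbdd n
  have hL0 : 0 ≤ L := le_ciInf fun n => hf0 (u n)
  have hftend : Tendsto (fun n => f (u n)) atTop (nhds L) :=
    tendsto_atTop_ciInf hanti hbdd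
  -- Cauchy sequences
  have hb0 : Tendsto (fun N => M * (f (u N) - L)) atTop (nhds 0) := by
    have : Tendsto (fun N => M * (f (u N) - L)) atTop (nhds (M * (L - L))) :=
      ((hftend.sub tendsto_const_nhds).const_mul M)
    simpa using this
  have hcau1 : CauchySeq (fun n => (u n).1) := by
    apply cauchySeq_of_le_tendsto_0 (fun N => M * (f (u N) - L)) _ hb0
    intro n m N hn hm
    rcases le_total n m with h | h
    · calc dist ((u n).1) ((u m).1) = ‖(u m).1 - (u n).1‖ := by rw [dist_comm, dist_eq_norm]
        _ ≤ M * (f (u n) - f (u m)) := (htel n m h).1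
        _ ≤ M * (f (u N) - L) := by
            have := hanti hn; have := hLle m; dsimp at *; nlinarith
    · calc dist ((u n).1) ((u m).1) = ‖(u n).1 - (u m).1‖ := by rw [dist_eq_norm]
        _ ≤ M * (f (u m) - f (u n)) := (htel m n h).1
        _ ≤ M * (f (u N) - L) := by
            have := hanti hm; have := hLle n; dsimp at *; nlinarith
  have hcau2 : CauchySeq (fun n => (u n).2) := by
    apply cauchySeq_of_le_tendsto_0 (fun N => M * (f (u N) - L)) _ hb0
    intro n m N hn hm
    rcases le_total n m with h | h
    · calc dist ((u n).2) ((u m).2) = ‖(u m).2 - (u n).2‖ := by rw [dist_comm, dist_eq_norm]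
        _ ≤ M * (f (u n) - f (u m)) := (htel n m h).2
        _ ≤ M * (f (u N) - L) := by
            have := hanti hn; have := hLle m; dsimp at *; nlinarith
    · calc dist ((u n).2) ((u m).2) = ‖(u n).2 - (u m).2‖ := by rw [dist_eq_norm]
        _ ≤ M * (f (u m) - f (u n)) := (htel m n h).2
        _ ≤ M * (f (u N) - L) := by
            have := hanti hm; have := hLle n; dsimp at *; nlinarith
  obtain ⟨pbar, hptend⟩ := cauchySeq_tendsto_of_complete hcau1
  obtain ⟨qbar, hqtend⟩ := cauchySeq_tendsto_of_complete hcau2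
  have hpbarA : pbar ∈ A := hA.mem_of_tendsto hptend (Filter.Eventually.of_forall fun n => (hmem n).1)
  have hqbarB : qbar ∈ B := hB.mem_of_tendsto hqtend (Filter.Eventually.of_forall fun n => (hmem n).2)
  have hfbar : ‖pbar - qbar - c‖ = L := by
    have h1 : Tendsto (fun n => f (u n)) atTop (nhds (‖pbar - qbar - c‖)) := by
      have : Tendsto (fun n => (u n).1 - (u n).2 - c) atTop (nhds (pbar - qbar - c)) :=
        (hptend.sub hqtend).sub tendsto_const_nhds
      exact this.norm
    exact tendsto_nhds_unique h1 hftend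
  -- distance of the limit to each iterate
  have hlimdist : ∀ n, ‖pbar - (u n).1‖ ≤ M * (f (u n) - L) ∧
      ‖qbar - (u n).2‖ ≤ M * (f (u n) - L) := by
    intro n
    constructor
    · refine le_of_tendsto ((hptend.sub tendsto_const_nhds).norm) ?_
      filter_upwards [Filter.eventually_ge_atTop n] with m hm
      calc ‖(u m).1 - (u n).1‖ ≤ M * (f (u n) - f (u m)) := (htel n m hm).1
        _ ≤ M * (f (u n) - L) := by have := hLle m; nlinarith
    · refine le_of_tendsto ((hqtend.sub tendsto_const_nhds).norm) ?_
      filter_upwards [Filter.eventually_ge_atTop n] with m hm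
      calc ‖(u m).2 - (u n).2‖ ≤ M * (f (u n) - f (u m)) := (htel n m hm).2
        _ ≤ M * (f (u n) - L) := by have := hLle m; nlinarith
  have hf00 : f (u 0) = ‖p₀ - q₀ - c‖ := by rw [hu0]
  -- main claim : L = 0
  have hLzero : L = 0 := by
    by_contra hLne
    have hLpos : 0 < L := lt_of_le_of_ne hL0 (Ne.symm hLne)
    have hpbar0 : ‖pbar - p₀‖ ≤ M * ‖p₀ - q₀ - c‖ := by
      have h1 := (hlimdist 0).1
      rw [hu0] at h1
      have h2 : f ((p₀, q₀) : X × X) = ‖p₀ - q₀ - c‖ := rfl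
      rw [h2] at h1
      nlinarith
    have hqbar0 : ‖qbar - q₀‖ ≤ M * ‖p₀ - q₀ - c‖ := by
      have h1 := (hlimdist 0).2
      rw [hu0] at h1
      have h2 : f ((p₀, q₀) : X × X) = ‖p₀ - q₀ - c‖ := rfl
      rw [h2] at h1
      nlinarith
    have hne : pbar - qbar ≠ c := by
      intro h
      rw [show pbar - qbar - c = 0 by rw [h, sub_self]] at hfbar
      simp at hfbar; exact hLne hfbar.symm
    obtain ⟨tb, htb0, ps, hpsA, qs, hqsB, hps, hqs, hdec⟩ :=
      H pbar hpbarA qbar hqbarB hpbar0 hqbar0 hne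
    -- at every stage, T (u n) contains t' = tb + (f (u n) - L)
    have hTn : ∀ n, (tb + (f (u n) - L)) ∈ T (u n) := by
      intro n
      refine ⟨?_, ps, hpsA, qs, hqsB, ?_, ?_, ?_⟩
      · have := hLle n; linarith
      · calc ‖ps - (u n).1‖ ≤ ‖ps - pbar‖ + ‖pbar - (u n).1‖ := by
              have := norm_sub_le_norm_sub_add_norm_sub ps pbar ((u n).1); linarith
          _ ≤ tb * M + M * (f (u n) - L) := add_le_add hps (hlimdist n).1
          _ = (tb + (f (u n) - L)) * M := by ring
      · calc ‖qs - (u n).2‖ ≤ ‖qs - qbar‖ + ‖qbar - (u n).2‖ := by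
              have := norm_sub_le_norm_sub_add_norm_sub qs qbar ((u n).2); linarith
          _ ≤ tb * M + M * (f (u n) - L) := add_le_add hqs (hlimdist n).2
          _ = (tb + (f (u n) - L)) * M := by ring
      · have : f (ps, qs) ≤ L - tb := by
          simpa [hf, hfbar] using hdec
        linarith
    -- so each step decreases f by at least tb / 2
    have hdecstep : ∀ n, f (u (n + 1)) ≤ f (u n) - tb / 2 := by
      intro n
      have hcond : (u n).1 ∈ A ∧ (u n).2 ∈ B ∧ (T (u n)).Nonempty :=
        ⟨(hmem n).1, (hmem n).2, ⟨_, hTn n⟩⟩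
      obtain ⟨-, -, t, htgt, ht0, -, -, h3⟩ := hnxt (u n) hcond
      have hsup : tb + (f (u n) - L) ≤ sSup (T (u n)) := le_csSup (hTbdd (u n)) (hTn n)
      have htbig : tb / 2 ≤ t := by
        have h1 := hLle n
        have : tb ≤ sSup (T (u n)) := le_trans (by linarith) hsup
        linarith
      rw [husucc]
      simp only [hstepdef, if_pos hcond]
      linarith
    have hlin : ∀ n : ℕ, f (u n) ≤ f (u 0) - n * (tb / 2) := by
      intro n
      induction n with
      | zero => simp
      | succ n ih =>
        have := hdecstep n
        push_cast
        push_cast at ih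
        linarith
    obtain ⟨n, hn⟩ := exists_nat_gt (f (u 0) / (tb / 2))
    have h1 := hlin n
    have h2 := hf0 (u n)
    have : f (u 0) < n * (tb / 2) := by
      rw [div_lt_iff₀ (by linarith : (0:ℝ) < tb / 2)] at hn
      linarith
    linarith
  -- conclude
  refine ⟨pbar, hpbarA, qbar, hqbarB, ?_, ?_, ?_⟩
  · exact sub_eq_zero.mp (norm_eq_zero.mp (hfbar.trans hLzero))
  · have h1 := (hlimdist 0).1
    rw [hu0, hLzero] at h1
    have h2 : f ((p₀, q₀) : X × X) = ‖p₀ - q₀ - c‖ := rfl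
    rw [h2] at h1
    linarith
  · have h1 := (hlimdist 0).2
    rw [hu0, hLzero] at h1
    have h2 : f ((p₀, q₀) : X × X) = ‖p₀ - q₀ - c‖ := rfl
    rw [h2] at h1
    linarith

open Filter in
theorem stmt7 {X : Type*} [NormedAddCommGroup X] [NormedSpace ℝ X] [CompleteSpace X]
    {A B : Set X} (hA : IsClosed A) (hB : IsClosed B) {xbar : X} (hx : xbar ∈ A ∩ B) :
    Transversal A B xbar ↔
      ∃ δ > 0, ∃ M > 0, ∀ a ∈ Metric.ball (0 : X) δ, ∀ b ∈ Metric.ball (0 : X) δ,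
        ∀ xA ∈ A ∩ Metric.ball (xbar + a) δ, ∀ xB ∈ B ∩ Metric.ball (xbar + b) δ,
          xA - a ≠ xB - b →
          ∃ t : ℕ → ℝ, ∃ xa : ℕ → X, ∃ xb : ℕ → X,
            (∀ m, 0 < t m) ∧ Filter.Tendsto t Filter.atTop (nhds 0) ∧
            (∀ m, xa m ∈ A) ∧ (∀ m, xb m ∈ B) ∧
            ∀ m, ‖xa m - xA‖ ≤ t m * M ∧ ‖xb m - xB‖ ≤ t m * M ∧
              ‖xa m - xb m - (a - b)‖ ≤ ‖xA - xB - (a - b)‖ - t m := by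
  constructor
  · rintro ⟨K, hK, δ, hδ, htrans⟩
    refine ⟨δ / 4, by positivity, K + 2, by positivity, ?_⟩
    rintro a ha b hb xA ⟨hxAA, hxAball⟩ xB ⟨hxBB, hxBball⟩ hne
    rw [mem_ball_zero_iff] at ha hb
    rw [mem_ball_iff_norm] at hxAball hxBball
    set d : ℝ := ‖xA - xB - (a - b)‖ with hd
    have hd0 : 0 < d := by
      rw [hd, norm_pos_iff]
      intro hcon
      apply hne
      have : xA - a - (xB - b) = 0 := by rw [← hcon]; abel
      exact sub_eq_zero.mp this
    set w : X := (xB - b) - (xA - a) with hw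
    have hwd : ‖w‖ = d := by
      rw [hw, hd, ← norm_neg]
      congr 1
      abel
    set e : X := d⁻¹ • w with he
    have hde : d • e = w := by
      rw [he, smul_smul, mul_inv_cancel₀ (ne_of_gt hd0), one_smul]
    have hee : ‖e‖ = 1 := by
      rw [he, norm_smul, Real.norm_eq_abs, abs_inv, abs_of_pos hd0, hwd,
        inv_mul_cancel₀ (ne_of_gt hd0)]
    have huxbar : ‖xA - a - xbar‖ < δ / 4 := by
      have : xA - a - xbar = xA - (xbar + a) := by abel
      rw [this]; exact hxAball
    have hvxbar : ‖xB - b - xbar‖ < δ / 4 := by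
      have : xB - b - xbar = xB - (xbar + b) := by abel
      rw [this]; exact hxBball
    have hdlt : d < δ / 2 := by
      have h1 : d = ‖(xA - a - xbar) - (xB - b - xbar)‖ := by
        rw [hd]; congr 1; abel
      rw [h1]
      calc ‖(xA - a - xbar) - (xB - b - xbar)‖ ≤ ‖xA - a - xbar‖ + ‖xB - b - xbar‖ :=
            norm_sub_le _ _
        _ < δ / 4 + δ / 4 := add_lt_add huxbar hvxbar
        _ = δ / 2 := by ring
    set c' : ℝ := min d (δ / 4) with hc'
    have hc'0 : 0 < c' := lt_min hd0 (by positivity)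
    -- the per-m construction
    have key : ∀ m : ℕ, ∃ pa ∈ A, ∃ pb ∈ B,
        ‖pa - xA‖ ≤ (c' * (1 / ((m : ℝ) + 1))) * (K + 2) ∧
        ‖pb - xB‖ ≤ (c' * (1 / ((m : ℝ) + 1))) * (K + 2) ∧
        ‖pa - pb - (a - b)‖ ≤ d - c' * (1 / ((m : ℝ) + 1)) := by
      intro m
      set t : ℝ := c' * (1 / ((m : ℝ) + 1)) with ht
      have hm1 : (0 : ℝ) < (m : ℝ) + 1 := by positivity
      have ht0 : 0 < t := by positivity
      have htc' : t ≤ c' := by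
        rw [ht]
        nth_rewrite 2 [show c' = c' * 1 by ring]
        apply mul_le_mul_of_nonneg_left _ (le_of_lt hc'0)
        rw [div_le_one hm1]; linarith
      have htd : t ≤ d := le_trans htc' (min_le_left _ _)
      have htδ : t ≤ δ / 4 := le_trans htc' (min_le_right _ _)
      set b' : X := b + (d - t) • e with hb'
      set p : X := (xA - a) + t • e with hp
      have hb'ball : b' ∈ ball (0 : X) δ := by
        rw [mem_ball_zero_iff, hb']
        calc ‖b + (d - t) • e‖ ≤ ‖b‖ + ‖(d - t) • e‖ := norm_add_le _ _
          _ = ‖b‖ + |d - t| := by rw [norm_smul, Real.norm_eq_abs, hee, mul_one]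
          _ = ‖b‖ + (d - t) := by rw [abs_of_nonneg (by linarith)]
          _ < δ / 4 + δ / 2 := by have := hb; linarith
          _ < δ := by linarith
      have haball : a ∈ ball (0 : X) δ := by
        rw [mem_ball_zero_iff]; linarith
      have hpball : p ∈ ball xbar δ := by
        rw [mem_ball_iff_norm, hp]
        calc ‖xA - a + t • e - xbar‖ ≤ ‖xA - a - xbar‖ + ‖t • e‖ := by
              have : xA - a + t • e - xbar = (xA - a - xbar) + t • e := by abel
              rw [this]; exact norm_add_le _ _
          _ = ‖xA - a - xbar‖ + t := by
              rw [norm_smul, Real.norm_eq_abs, hee, mul_one, abs_of_pos ht0]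
          _ < δ / 4 + δ / 4 := by linarith
          _ < δ := by linarith
      have hAmem : xA - a ∈ (· - a) '' A := ⟨xA, hxAA, rfl⟩
      have hBmem : p ∈ (· - b') '' B := by
        refine ⟨xB, hxBB, ?_⟩
        show xB - b' = p
        rw [hb', hp, sub_smul, hde, hw]
        abel
      have hinfA : EMetric.infEdist p ((· - a) '' A) ≤ ENNReal.ofReal t := by
        calc EMetric.infEdist p ((· - a) '' A) ≤ edist p (xA - a) :=
              EMetric.infEdist_le_edist_of_mem hAmem
          _ = ENNReal.ofReal ‖p - (xA - a)‖ := by rw [edist_dist, dist_eq_norm]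
          _ = ENNReal.ofReal t := by
              rw [hp, show xA - a + t • e - (xA - a) = t • e by abel, norm_smul,
                Real.norm_eq_abs, hee, mul_one, abs_of_pos ht0]
      have hinfB : EMetric.infEdist p ((· - b') '' B) = 0 :=
        EMetric.infEdist_zero_of_mem hBmem
      have hmain := htrans a haball b' hb'ball p hpball
      rw [hinfB, add_zero] at hmain
      have hlt : EMetric.infEdist p (((· - a) '' A) ∩ ((· - b') '' B)) <
          ENNReal.ofReal ((K + 1) * t) := by
        calc EMetric.infEdist p (((· - a) '' A) ∩ ((· - b') '' B))
            ≤ ENNReal.ofReal K * EMetric.infEdist p ((· - a) '' A) := hmain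
          _ ≤ ENNReal.ofReal K * ENNReal.ofReal t := by
              exact mul_le_mul_right hinfA _
          _ = ENNReal.ofReal (K * t) := by
              rw [ENNReal.ofReal_mul (le_of_lt hK)]
          _ < ENNReal.ofReal ((K + 1) * t) := by
              rw [ENNReal.ofReal_lt_ofReal_iff (by positivity)]
              nlinarith
      obtain ⟨z, hz, hzdist⟩ := EMetric.infEdist_lt_iff.mp hlt
      obtain ⟨⟨w1, hw1A, hw1⟩, ⟨w2, hw2B, hw2⟩⟩ := hz
      have hzp : ‖z - p‖ < (K + 1) * t := by
        rw [edist_dist] at hzdist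
        have := (ENNReal.ofReal_lt_ofReal_iff_of_nonneg dist_nonneg).mp hzdist
        rw [dist_comm, dist_eq_norm] at this
        exact this
      have hw1' : w1 - a = z := hw1
      have hw2' : w2 - b' = z := hw2
      have hw1z : w1 = z + a := by rw [← hw1']; abel
      have hw2z : w2 = z + b' := by rw [← hw2']; abel
      refine ⟨w1, hw1A, w2, hw2B, ?_, ?_, ?_⟩
      · have hid : w1 - xA = (z - p) + (p - (xA - a)) := by rw [hw1z]; abel
        calc ‖w1 - xA‖ = ‖(z - p) + (p - (xA - a))‖ := by rw [hid]
          _ ≤ ‖z - p‖ + ‖p - (xA - a)‖ := norm_add_le _ _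
          _ ≤ (K + 1) * t + t := by
              have : ‖p - (xA - a)‖ = t := by
                rw [hp, show xA - a + t • e - (xA - a) = t • e by abel, norm_smul,
                  Real.norm_eq_abs, hee, mul_one, abs_of_pos ht0]
              linarith
          _ = t * (K + 2) := by ring
      · have hxBb' : xB = p + b' := by
          have h2 : xB - b' = p := by
            rw [hb', hp, sub_smul, hde, hw]; abel
          rw [← h2]; abel
        have hid : w2 - xB = z - p := by rw [hw2z, hxBb']; abel
        calc ‖w2 - xB‖ = ‖z - p‖ := by rw [hid]
          _ ≤ (K + 1) * t := le_of_lt hzp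
          _ ≤ t * (K + 2) := by nlinarith
      · have : w1 - w2 - (a - b) = -((d - t) • e) := by
          rw [hw1z, hw2z, hb']; abel
        rw [this, norm_neg, norm_smul, Real.norm_eq_abs, hee, mul_one,
          abs_of_nonneg (by linarith)]
    choose pa hpaA pb hpbB hkey using key
    refine ⟨fun m => c' * (1 / ((m : ℝ) + 1)), pa, pb, ?_, ?_, hpaA, hpbB, ?_⟩
    · intro m; positivity
    · have := tendsto_one_div_add_atTop_nhds_zero_nat.const_mul c'
      simpa using this
    · intro m
      exact ⟨(hkey m).1, (hkey m).2.1, (hkey m).2.2⟩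
  · rintro ⟨δ, hδ, M, hM, hP⟩
    have h6M : (0 : ℝ) < 6 * M + 4 := by linarith
    set δ₀ : ℝ := δ / (6 * M + 4) with hδ₀def
    have hδ₀ : 0 < δ₀ := by positivity
    have hδ₀δ : δ₀ ≤ δ := by
      rw [hδ₀def, div_le_iff₀ h6M]; nlinarith
    refine ⟨M + 1, by linarith, δ₀, hδ₀, ?_⟩
    intro a ha b hb x hxball
    rw [mem_ball_zero_iff] at ha hb
    rw [mem_ball_iff_norm] at hxball
    set SA : Set X := (· - a) '' A with hSA
    set SB : Set X := (· - b) '' B with hSB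
    have hxbarA : xbar - a ∈ SA := ⟨xbar, hx.1, rfl⟩
    have hxbarB : xbar - b ∈ SB := ⟨xbar, hx.2, rfl⟩
    set dA : ℝ≥0∞ := EMetric.infEdist x SA with hdA
    set dB : ℝ≥0∞ := EMetric.infEdist x SB with hdB
    have hdAfin : dA ≠ ⊤ :=
      ne_top_of_le_ne_top (edist_ne_top _ _) (EMetric.infEdist_le_edist_of_mem hxbarA)
    have hdBfin : dB ≠ ⊤ :=
      ne_top_of_le_ne_top (edist_ne_top _ _) (EMetric.infEdist_le_edist_of_mem hxbarB)
    set rA : ℝ := dA.toReal with hrA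
    set rB : ℝ := dB.toReal with hrB
    have hrA0 : 0 ≤ rA := ENNReal.toReal_nonneg
    have hrB0 : 0 ≤ rB := ENNReal.toReal_nonneg
    have hrAlt : rA < 2 * δ₀ := by
      have h1 : dA ≤ ENNReal.ofReal (dist x (xbar - a)) := by
        rw [← edist_dist]; exact EMetric.infEdist_le_edist_of_mem hxbarA
      have h2 : rA ≤ dist x (xbar - a) :=
        ENNReal.toReal_le_of_le_ofReal dist_nonneg h1
      have h3 : dist x (xbar - a) < 2 * δ₀ := by
        rw [dist_eq_norm, show x - (xbar - a) = (x - xbar) + a by abel]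
        calc ‖(x - xbar) + a‖ ≤ ‖x - xbar‖ + ‖a‖ := norm_add_le _ _
          _ < δ₀ + δ₀ := add_lt_add hxball (lt_of_lt_of_le ha (le_refl _)) |>.trans_le
              (by linarith [ha, hxball])
          _ = 2 * δ₀ := by ring
      linarith
    have hrBlt : rB < 2 * δ₀ := by
      have h1 : dB ≤ ENNReal.ofReal (dist x (xbar - b)) := by
        rw [← edist_dist]; exact EMetric.infEdist_le_edist_of_mem hxbarB
      have h2 : rB ≤ dist x (xbar - b) :=
        ENNReal.toReal_le_of_le_ofReal dist_nonneg h1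
      have h3 : dist x (xbar - b) < 2 * δ₀ := by
        rw [dist_eq_norm, show x - (xbar - b) = (x - xbar) + b by abel]
        calc ‖(x - xbar) + b‖ ≤ ‖x - xbar‖ + ‖b‖ := norm_add_le _ _
          _ < δ₀ + δ₀ := add_lt_add hxball hb
          _ = 2 * δ₀ := by ring
      linarith
    -- main approximation claim
    have hmain : ∀ ε : ℝ, 0 < ε → ε ≤ δ₀ →
        EMetric.infEdist x (SA ∩ SB) ≤
          ENNReal.ofReal ((M + 1) * (rA + rB) + (2 * M + 1) * ε) := by
      intro ε hε hεδ₀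
      -- pick near-optimal starting points
      obtain ⟨p₀, hp₀A, hp₀⟩ : ∃ p₀ ∈ A, ‖x - (p₀ - a)‖ < rA + ε := by
        have hlt : EMetric.infEdist x SA < ENNReal.ofReal (rA + ε) := by
          have : dA = ENNReal.ofReal rA := (ENNReal.ofReal_toReal hdAfin).symm
          rw [← hdA, this, ENNReal.ofReal_lt_ofReal_iff (by linarith)]
          linarith
        obtain ⟨y, hySA, hy⟩ := EMetric.infEdist_lt_iff.mp hlt
        obtain ⟨p₀, hp₀A, rfl⟩ := hySA
        refine ⟨p₀, hp₀A, ?_⟩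
        rw [edist_dist] at hy
        have := (ENNReal.ofReal_lt_ofReal_iff_of_nonneg dist_nonneg).mp hy
        rwa [dist_eq_norm] at this
      obtain ⟨q₀, hq₀B, hq₀⟩ : ∃ q₀ ∈ B, ‖x - (q₀ - b)‖ < rB + ε := by
        have hlt : EMetric.infEdist x SB < ENNReal.ofReal (rB + ε) := by
          have : dB = ENNReal.ofReal rB := (ENNReal.ofReal_toReal hdBfin).symm
          rw [← hdB, this, ENNReal.ofReal_lt_ofReal_iff (by linarith)]
          linarith
        obtain ⟨y, hySB, hy⟩ := EMetric.infEdist_lt_iff.mp hlt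
        obtain ⟨q₀, hq₀B, rfl⟩ := hySB
        refine ⟨q₀, hq₀B, ?_⟩
        rw [edist_dist] at hy
        have := (ENNReal.ofReal_lt_ofReal_iff_of_nonneg dist_nonneg).mp hy
        rwa [dist_eq_norm] at this
      have hf₀ : ‖p₀ - q₀ - (a - b)‖ ≤ rA + rB + 2 * ε := by
        have hid : p₀ - q₀ - (a - b) = -((x - (p₀ - a)) - (x - (q₀ - b))) := by abel
        rw [hid, norm_neg]
        calc ‖(x - (p₀ - a)) - (x - (q₀ - b))‖ ≤ ‖x - (p₀ - a)‖ + ‖x - (q₀ - b)‖ :=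
              norm_sub_le _ _
          _ ≤ rA + rB + 2 * ε := by linarith
      have hf₀lt : ‖p₀ - q₀ - (a - b)‖ < 6 * δ₀ := by linarith
      -- hypothesis of the descent lemma
      have H : ∀ p ∈ A, ∀ q ∈ B, ‖p - p₀‖ ≤ M * ‖p₀ - q₀ - (a - b)‖ →
          ‖q - q₀‖ ≤ M * ‖p₀ - q₀ - (a - b)‖ → p - q ≠ a - b →
          ∃ t > 0, ∃ p' ∈ A, ∃ q' ∈ B, ‖p' - p‖ ≤ t * M ∧ ‖q' - q‖ ≤ t * M ∧
            ‖p' - q' - (a - b)‖ ≤ ‖p - q - (a - b)‖ - t := by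
        intro p hpA q hqB hpd hqd hneq
        have hMf₀ : M * ‖p₀ - q₀ - (a - b)‖ < 6 * M * δ₀ := by nlinarith
        have hpball : p ∈ ball (xbar + a) δ := by
          rw [mem_ball_iff_norm]
          have hid : p - (xbar + a) = (p - p₀) + ((p₀ - a) - x) + (x - xbar) := by abel
          rw [hid]
          calc ‖(p - p₀) + ((p₀ - a) - x) + (x - xbar)‖
              ≤ ‖(p - p₀) + ((p₀ - a) - x)‖ + ‖x - xbar‖ := norm_add_le _ _
            _ ≤ ‖p - p₀‖ + ‖(p₀ - a) - x‖ + ‖x - xbar‖ := by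
                linarith [norm_add_le (p - p₀) ((p₀ - a) - x)]
            _ < δ := by
                rw [← norm_neg ((p₀ - a) - x), show -((p₀ - a) - x) = x - (p₀ - a) by abel]
                have hδeq : δ = (6 * M + 4) * δ₀ := by
                  rw [hδ₀def]; field_simp
                rw [hδeq]; nlinarith
        have hqball : q ∈ ball (xbar + b) δ := by
          rw [mem_ball_iff_norm]
          have hid : q - (xbar + b) = (q - q₀) + ((q₀ - b) - x) + (x - xbar) := by abel
          rw [hid]
          calc ‖(q - q₀) + ((q₀ - b) - x) + (x - xbar)‖
              ≤ ‖(q - q₀) + ((q₀ - b) - x)‖ + ‖x - xbar‖ := norm_add_le _ _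
            _ ≤ ‖q - q₀‖ + ‖(q₀ - b) - x‖ + ‖x - xbar‖ := by
                linarith [norm_add_le (q - q₀) ((q₀ - b) - x)]
            _ < δ := by
                rw [← norm_neg ((q₀ - b) - x), show -((q₀ - b) - x) = x - (q₀ - b) by abel]
                have hδeq : δ = (6 * M + 4) * δ₀ := by
                  rw [hδ₀def]; field_simp
                rw [hδeq]; nlinarith
        have hneq' : p - a ≠ q - b := by
          intro hc
          apply hneq
          have : p - q = (p - a) - (q - b) + (a - b) := by abel
          rw [this, hc, sub_self, zero_add]
        obtain ⟨t, xa, xb, ht0, -, hxaA, hxbB, hbnd⟩ :=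
          hP a (mem_ball_zero_iff.mpr (lt_of_lt_of_le ha hδ₀δ))
            b (mem_ball_zero_iff.mpr (lt_of_lt_of_le hb hδ₀δ))
            p ⟨hpA, hpball⟩ q ⟨hqB, hqball⟩ hneq'
        exact ⟨t 0, ht0 0, xa 0, hxaA 0, xb 0, hxbB 0, (hbnd 0).1, (hbnd 0).2.1,
          (hbnd 0).2.2⟩
      obtain ⟨pbar, hpbarA, qbar, hqbarB, hpq, hpd, hqd⟩ :=
        descent_aux hA hB hM hp₀A hq₀B H
      have hwSA : pbar - a ∈ SA := ⟨pbar, hpbarA, rfl⟩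
      have hwSB : pbar - a ∈ SB := by
        refine ⟨qbar, hqbarB, ?_⟩
        show qbar - b = pbar - a
        have : pbar - a = qbar - b := by
          rw [sub_eq_sub_iff_sub_eq_sub]; exact hpq
        exact this.symm
      calc EMetric.infEdist x (SA ∩ SB) ≤ edist x (pbar - a) :=
            EMetric.infEdist_le_edist_of_mem ⟨hwSA, hwSB⟩
        _ = ENNReal.ofReal ‖x - (pbar - a)‖ := by rw [edist_dist, dist_eq_norm]
        _ ≤ ENNReal.ofReal ((M + 1) * (rA + rB) + (2 * M + 1) * ε) := by
            apply ENNReal.ofReal_le_ofReal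
            have hid : x - (pbar - a) = (x - (p₀ - a)) + (p₀ - pbar) := by abel
            rw [hid]
            calc ‖(x - (p₀ - a)) + (p₀ - pbar)‖ ≤ ‖x - (p₀ - a)‖ + ‖p₀ - pbar‖ :=
                  norm_add_le _ _
              _ ≤ (rA + ε) + M * ‖p₀ - q₀ - (a - b)‖ := by
                  rw [← norm_neg (p₀ - pbar), show -(p₀ - pbar) = pbar - p₀ by abel]
                  linarith
              _ ≤ (rA + ε) + M * (rA + rB + 2 * ε) := by nlinarith
              _ ≤ (M + 1) * (rA + rB) + (2 * M + 1) * ε := by nlinarith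
    -- conclude from the approximation claim
    have hrhs : ENNReal.ofReal ((M + 1) * (rA + rB)) = ENNReal.ofReal (M + 1) * (dA + dB) := by
      rw [ENNReal.ofReal_mul (by linarith), ENNReal.ofReal_add hrA0 hrB0, hrA, hrB,
        ENNReal.ofReal_toReal hdAfin, ENNReal.ofReal_toReal hdBfin]
    apply ENNReal.le_of_forall_pos_le_add
    intro ε hε hfin
    have hεR : (0 : ℝ) < (ε : ℝ) := hε
    set ε' : ℝ := min ((ε : ℝ) / (2 * M + 1)) δ₀ with hε'def
    have hε'0 : 0 < ε' := lt_min (by positivity) hδ₀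
    have h2M1 : (0:ℝ) < 2 * M + 1 := by linarith
    have hε'le : (2 * M + 1) * ε' ≤ (ε : ℝ) := by
      have h1 : ε' ≤ (ε : ℝ) / (2 * M + 1) := min_le_left _ _
      calc (2 * M + 1) * ε' ≤ (2 * M + 1) * ((ε : ℝ) / (2 * M + 1)) := by nlinarith
        _ = (ε : ℝ) := by field_simp
    calc EMetric.infEdist x (SA ∩ SB)
        ≤ ENNReal.ofReal ((M + 1) * (rA + rB) + (2 * M + 1) * ε') :=
          hmain ε' hε'0 (min_le_right _ _)
      _ ≤ ENNReal.ofReal ((M + 1) * (rA + rB)) + ENNReal.ofReal ((2 * M + 1) * ε') :=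
          ENNReal.ofReal_add_le
      _ ≤ ENNReal.ofReal (M + 1) * (dA + dB) + (ε : ℝ≥0∞) := by
          rw [hrhs]
          gcongr
          calc ENNReal.ofReal ((2 * M + 1) * ε') ≤ ENNReal.ofReal (ε : ℝ) :=
                ENNReal.ofReal_le_ofReal hε'le
            _ = (ε : ℝ≥0∞) := ENNReal.ofReal_coe_nnreal
end

section
/- Let A and B be closed subsets of a Banach space X and let x̄ ∈ A ∩ B with A and B transversal at x̄. Then there exist δ > 0 and M > 0 such that for any a ∈ B_δ(0) and b ∈ B_δ(0), any x^A ∈ A ∩ B_δ(x̄ + a) and x^B ∈ B ∩ B_δ(x̄ + b) with x^A − a ≠ x^B − b, there exists λ > 0 such that for every t ∈ (0, λ] there exist x_t^A ∈ A and x_t^B ∈ B with ‖x_t^A − x^A‖ ≤ tM, ‖x_t^B − x^B‖ ≤ tM and ‖x_t^A − x_t^B − (a − b)‖ ≤ ‖x^A − x^B − (a − b)‖ − t. -/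
open Metric Set
open scoped ENNReal

theorem stmt8 {X : Type*} [NormedAddCommGroup X] [NormedSpace ℝ X] [CompleteSpace X]
    {A B : Set X} (hA : IsClosed A) (hB : IsClosed B) {xbar : X} (hx : xbar ∈ A ∩ B)
    (hTr : Transversal A B xbar) :
    ∃ δ > 0, ∃ M > 0, ∀ a ∈ Metric.ball (0 : X) δ, ∀ b ∈ Metric.ball (0 : X) δ,
      ∀ xA ∈ A ∩ Metric.ball (xbar + a) δ, ∀ xB ∈ B ∩ Metric.ball (xbar + b) δ,
        xA - a ≠ xB - b →
        ∃ lam > 0, ∀ t ∈ Set.Ioc (0 : ℝ) lam,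
          ∃ xA' ∈ A, ∃ xB' ∈ B,
            ‖xA' - xA‖ ≤ t * M ∧ ‖xB' - xB‖ ≤ t * M ∧
            ‖xA' - xB' - (a - b)‖ ≤ ‖xA - xB - (a - b)‖ - t := by
  obtain ⟨K, hK, δ₀, hδ₀, hT⟩ := hTr
  refine ⟨δ₀ / 8, by positivity, K + 2, by linarith, ?_⟩
  rintro a ha b hb xA ⟨hxA, hxAb⟩ xB ⟨hxB, hxBb⟩ hne
  set u := xA - a with hu
  set w := xB - b with hw
  have hr : 0 < ‖u - w‖ := norm_pos_iff.mpr (sub_ne_zero.mpr hne)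
  set e : X := ‖u - w‖⁻¹ • (u - w) with he
  have hee : ‖e‖ = 1 := by
    rw [he, norm_smul, norm_inv, Real.norm_eq_abs, abs_of_pos hr, inv_mul_cancel₀ hr.ne']
  have hub : ‖u - xbar‖ < δ₀ / 8 := by
    have h := mem_ball.mp hxAb
    rw [dist_eq_norm] at h
    have : u - xbar = xA - (xbar + a) := by rw [hu]; abel
    rw [this]; exact h
  have hwb : ‖w - xbar‖ < δ₀ / 8 := by
    have h := mem_ball.mp hxBb
    rw [dist_eq_norm] at h
    have : w - xbar = xB - (xbar + b) := by rw [hw]; abel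
    rw [this]; exact h
  have hwu : ‖w - u‖ < δ₀ / 4 := by
    calc ‖w - u‖ = ‖(w - xbar) - (u - xbar)‖ := by congr 1; abel
      _ ≤ ‖w - xbar‖ + ‖u - xbar‖ := norm_sub_le _ _
      _ < δ₀ / 4 := by linarith
  refine ⟨min ‖u - w‖ (δ₀ / 2), lt_min hr (by positivity), ?_⟩
  rintro t ⟨ht0, htl⟩
  have htr : t ≤ ‖u - w‖ := htl.trans (min_le_left _ _)
  have htδ : t ≤ δ₀ / 2 := htl.trans (min_le_right _ _)
  set b' := b + (w - u) + t • e with hb'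
  have hanorm : ‖a‖ < δ₀ / 8 := by simpa [mem_ball_zero_iff] using ha
  have hbnorm : ‖b‖ < δ₀ / 8 := by simpa [mem_ball_zero_iff] using hb
  have hb'mem : b' ∈ Metric.ball (0 : X) δ₀ := by
    rw [mem_ball_zero_iff, hb']
    calc ‖b + (w - u) + t • e‖ ≤ ‖b‖ + ‖w - u‖ + ‖t • e‖ := norm_add₃_le
      _ = ‖b‖ + ‖w - u‖ + t := by rw [norm_smul, Real.norm_eq_abs, abs_of_pos ht0, hee, mul_one]
      _ < δ₀ := by linarith
  have hamem : a ∈ Metric.ball (0 : X) δ₀ := by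
    rw [mem_ball_zero_iff]; linarith
  have humem : u ∈ Metric.ball xbar δ₀ := by
    rw [mem_ball, dist_eq_norm]; linarith
  have h1 : EMetric.infEdist u ((· - a) '' A) = 0 :=
    EMetric.infEdist_zero_of_mem ⟨xA, hxA, rfl⟩
  have hxBb' : xB - b' = u - t • e := by rw [hb', hw]; abel
  have h2 : EMetric.infEdist u ((· - b') '' B) ≤ ENNReal.ofReal t := by
    calc EMetric.infEdist u ((· - b') '' B) ≤ edist u (xB - b') :=
          EMetric.infEdist_le_edist_of_mem ⟨xB, hxB, rfl⟩
      _ = ENNReal.ofReal t := by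
          rw [hxBb', edist_dist, dist_eq_norm, sub_sub_cancel, norm_smul,
            Real.norm_eq_abs, abs_of_pos ht0, hee, mul_one]
  have h3 := hT a hamem b' hb'mem u humem
  have h4 : EMetric.infEdist u (((· - a) '' A) ∩ ((· - b') '' B)) <
      ENNReal.ofReal (t * (K + 1)) := by
    calc EMetric.infEdist u (((· - a) '' A) ∩ ((· - b') '' B))
        ≤ ENNReal.ofReal K * (0 + ENNReal.ofReal t) := by
          refine h3.trans ?_
          rw [h1]
          gcongr
      _ = ENNReal.ofReal (K * t) := by
          rw [zero_add, ← ENNReal.ofReal_mul hK.le]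
      _ < ENNReal.ofReal (t * (K + 1)) := by
          rw [ENNReal.ofReal_lt_ofReal_iff (by positivity)]
          nlinarith
  obtain ⟨z, hz, hdz⟩ := EMetric.infEdist_lt_iff.mp h4
  obtain ⟨⟨p, hp, hpz⟩, ⟨q, hq, hqz⟩⟩ := hz
  have hdz' : ‖u - z‖ < t * (K + 1) := by
    rw [← dist_eq_norm]
    exact edist_lt_ofReal.mp hdz
  simp only at hpz hqz
  refine ⟨p, hp, q, hq, ?_, ?_, ?_⟩
  · have hpe : p - xA = z - u := by rw [← hpz, hu]; abel
    rw [hpe]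
    calc ‖z - u‖ = ‖u - z‖ := by rw [norm_sub_rev]
      _ ≤ t * (K + 1) := hdz'.le
      _ ≤ t * (K + 2) := by nlinarith
  · have hqe : q - xB = (z - u) + t • e := by
      have : q = z + b' := by rw [← hqz]; abel
      rw [this, hb', hw]; abel
    rw [hqe]
    calc ‖(z - u) + t • e‖ ≤ ‖z - u‖ + ‖t • e‖ := norm_add_le _ _
      _ = ‖u - z‖ + t := by
          rw [norm_sub_rev, norm_smul, Real.norm_eq_abs, abs_of_pos ht0, hee, mul_one]
      _ ≤ t * (K + 2) := by nlinarith
  · have hpq : p - q - (a - b) = (u - w) - t • e := by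
      have hpe : p = z + a := by rw [← hpz]; abel
      have hqe : q = z + b' := by rw [← hqz]; abel
      rw [hpe, hqe, hb']; abel
    have hxx : xA - xB - (a - b) = u - w := by rw [hu, hw]; abel
    rw [hpq, hxx]
    have hsm : (u - w) - t • e = (1 - t * ‖u - w‖⁻¹) • (u - w) := by
      rw [he, smul_smul, sub_smul, one_smul]
    rw [hsm, norm_smul, Real.norm_eq_abs]
    have h01 : 0 ≤ 1 - t * ‖u - w‖⁻¹ := by
      have : t * ‖u - w‖⁻¹ ≤ 1 := by
        rw [← div_eq_mul_inv, div_le_one hr]; exact htr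
      linarith
    rw [abs_of_nonneg h01, sub_mul, one_mul, mul_assoc, inv_mul_cancel₀ hr.ne', mul_one]
end

section
/- Let A and B be closed subsets of a Banach space X and let x̄ ∈ A ∩ B. Then A and B are transversal at x̄ if and only if there exist δ > 0 and κ > 0 such that for all a, b ∈ X with ‖a‖ ≤ δ and ‖b‖ ≤ δ, and all x ∈ (A − a) ∩ B_δ(x̄) and y ∈ (B − b) ∩ B_δ(x̄) with x ≠ y, the nonlocal slope satisfies |∇φ_{a,b}|◇(x, y) = sup_{(u,v) ≠ (x,y)} max{φ_{a,b}(x,y) − φ_{a,b}(u,v), 0} / ‖(x,y) − (u,v)‖ ≥ κ, where φ_{a,b} denotes the coupling function of the sets A − a and B − b. -/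
open Metric Set
open scoped ENNReal

/-- `setInd S x` is `0` if `x ∈ S` and `+∞` otherwise (indicator in `ℝ≥0∞`). -/
noncomputable def setInd {X : Type*} (S : Set X) (x : X) : ℝ≥0∞ :=
  ⨅ (_ : x ∈ S), 0

/-- The coupling function `φ(x,y) = δ_A(x) + d(x,y) + δ_B(y)` of the sets `A` and `B`. -/
noncomputable def coupling {X : Type*} [MetricSpace X] (A B : Set X) (p : X × X) : ℝ≥0∞ :=
  setInd A p.1 + ENNReal.ofReal (dist p.1 p.2) + setInd B p.2

/-- The nonlocal slope `|∇φ|◇(x,y)` of the coupling function of `A` and `B`,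
with `X × X` carrying the sum metric. -/
noncomputable def couplingNLSlope {X : Type*} [MetricSpace X] (A B : Set X) (x y : X) : ℝ≥0∞ :=
  ⨆ (p : X × X) (_ : p ≠ (x, y)),
    (coupling A B (x, y) - coupling A B p) / ENNReal.ofReal (dist x p.1 + dist y p.2)

/-- The (local) slope `|∇φ|(x,y)` of the coupling function of `A` and `B`,
with `X × X` carrying the sum metric. -/
noncomputable def couplingSlope {X : Type*} [MetricSpace X] (A B : Set X) (x y : X) : ℝ≥0∞ :=
  Filter.limsup
    (fun p : X × X =>
      (coupling A B (x, y) - coupling A B p) / ENNReal.ofReal (dist x p.1 + dist y p.2))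
    (nhdsWithin (x, y) {q | q ≠ (x, y)})

/-! If `A` and `B` are transversal with constant `K`, then for `x ∈ A - a`, `y ∈ B - b` there is
`w ∈ (A - a) ∩ (B - b)` with `‖x - w‖ < (K + 1)‖x - y‖`, and the test point `(w, w)` shows that the
nonlocal slope at `(x, y)` is at least `1 / (2K + 3)`.

Conversely, given `x` near `x̄`, pick nearly nearest points `x₁ ∈ A - a`, `y₁ ∈ B - b` and apply
Ekeland's variational principle to `(u, v) ↦ ‖u - v‖` on the complete set `(A - a) × (B - b)` with
constant `κ / 2`, starting from `(x₁, y₁)`. At the resulting point `(u, v)` the nonlocal slope is at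
most `κ / 2`, so the uniform slope bound forces `u = v`: this is a point of the intersection within
`‖x₁ - y₁‖ / (κ / 2)` of `x₁`, which gives the transversality estimate with `K = 1 + 2 / κ`. -/

open Filter Topology

namespace Ekeland

variable {α : Type*} [MetricSpace α] {f : α → ℝ} {ε : ℝ}

def descentSet (f : α → ℝ) (ε : ℝ) (p : α) : Set α := {q | f q + ε * dist p q ≤ f p}

lemma mem_descentSet_self (p : α) : p ∈ descentSet f ε p := by simp [descentSet]

lemma isClosed_descentSet (hf : LowerSemicontinuous f) (p : α) :
    IsClosed (descentSet f ε p) :=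
  (hf.add ((continuous_const.dist continuous_id).const_mul ε).lowerSemicontinuous
    ).isClosed_preimage (f p)

lemma descentSet_subset (hε : 0 ≤ ε) {p q : α} (hq : q ∈ descentSet f ε p) :
    descentSet f ε q ⊆ descentSet f ε p := fun r hr => by
  have := mul_le_mul_of_nonneg_left (dist_triangle p q r) hε
  simp only [descentSet, mem_ofPred_eq] at hq hr ⊢
  linarith

/-- Any almost minimizer `q` of `f` on `descentSet f ε p` works. -/
lemma exists_mem_descentSet_subset_closedBall (hbdd : BddBelow (range f)) (hε : 0 < ε)
    (p : α) {η : ℝ} (hη : 0 < η) :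
    ∃ q ∈ descentSet f ε p, descentSet f ε q ⊆ closedBall q η := by
  obtain ⟨_, ⟨q, hq, rfl⟩, hq_lt⟩ := exists_lt_of_csInf_lt
    (⟨f p, p, mem_descentSet_self p, rfl⟩ : (f '' descentSet f ε p).Nonempty)
    (lt_add_of_pos_right _ (mul_pos hε hη))
  refine ⟨q, hq, fun r hr => ?_⟩
  have hr_inf : sInf (f '' descentSet f ε p) ≤ f r :=
    csInf_le (hbdd.mono (image_subset_range _ _)) ⟨r, descentSet_subset hε.le hq hr, rfl⟩
  have hr_desc : f r + ε * dist q r ≤ f q := hr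
  rw [mem_closedBall, dist_comm, ← mul_le_mul_iff_right₀ hε]
  linarith

/-- **Ekeland's variational principle.** The descent sets along an almost minimizing sequence are
nested closed sets whose diameters tend to `0`; their common point is `z`. -/
theorem exists_forall_lt_add_dist [CompleteSpace α] (hf : LowerSemicontinuous f)
    (hbdd : BddBelow (range f)) (hε : 0 < ε) (x₀ : α) :
    ∃ z, f z + ε * dist x₀ z ≤ f x₀ ∧ ∀ w ≠ z, f z < f w + ε * dist z w := by
  choose g hg_mem hg_ball using fun p (n : ℕ) =>
    exists_mem_descentSet_subset_closedBall hbdd hε p (pow_pos (one_half_pos (α := ℝ)) n)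
  let x : ℕ → α := fun n => Nat.rec x₀ (fun n p => g p n) n
  let s : ℕ → Set α := fun n => descentSet f ε (x (n + 1))
  have hs_anti : Antitone s := antitone_nat_of_succ_le fun n =>
    descentSet_subset hε.le (hg_mem (x (n + 1)) (n + 1))
  have hs_ball (n : ℕ) : s n ⊆ closedBall (x (n + 1)) ((1 / 2) ^ n) := hg_ball (x n) n
  have hs_diam (n : ℕ) : diam (s n) ≤ 2 * (1 / 2) ^ n :=
    (diam_mono (hs_ball n) isBounded_closedBall).trans (diam_closedBall (by positivity))
  have hdiam_lim : Tendsto (fun n => 2 * (1 / 2 : ℝ) ^ n) atTop (𝓝 0) := by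
    simpa using (tendsto_pow_atTop_nhds_zero_of_lt_one (by norm_num : (0 : ℝ) ≤ 1 / 2)
      (by norm_num)).const_mul 2
  obtain ⟨z, hz⟩ := nonempty_iInter_of_nonempty_biInter
    (fun n => isClosed_descentSet hf _)
    (fun n => isBounded_closedBall.subset (hs_ball n))
    (fun N => ⟨x (N + 1), mem_iInter₂.2 fun n hn => hs_anti hn (mem_descentSet_self _)⟩)
    (squeeze_zero (fun n => diam_nonneg) hs_diam hdiam_lim)
  rw [mem_iInter] at hz
  refine ⟨z, descentSet_subset hε.le (hg_mem x₀ 0) (hz 0), fun w hw => ?_⟩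
  by_contra! hzw
  have hw_mem (n : ℕ) : w ∈ s n := descentSet_subset hε.le (hz n) hzw
  have hdist : dist z w ≤ 0 := ge_of_tendsto' hdiam_lim fun n =>
    (dist_le_diam_of_mem (isBounded_closedBall.subset (hs_ball n)) (hz n) (hw_mem n)).trans
      (hs_diam n)
  exact hw (dist_le_zero.1 hdist).symm

end Ekeland

section InfEDist

variable {X : Type*} [PseudoEMetricSpace X] {A B : Set X} {x : X}

lemma infEDist_inter_ball_of_lt {r : ℝ≥0∞} (h : infEDist x A < r) :
    infEDist x (A ∩ eball x r) = infEDist x A := by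
  refine le_antisymm (le_of_forall_gt fun t ht => ?_) (infEDist_anti inter_subset_left)
  obtain ⟨y, hy, hxy⟩ := infEDist_lt_iff.1 (lt_min ht h)
  have hy_ball : y ∈ eball x r := mem_eball'.2 (hxy.trans_le (min_le_right _ _))
  exact (infEDist_le_edist_of_mem (mem_inter hy hy_ball)).trans_lt (hxy.trans_le (min_le_left _ _))

lemma le_mul_infEDist_add_infEDist {c K : ℝ≥0∞} (hK₀ : K ≠ 0) (hK : K ≠ ⊤)
    (h : ∀ a ∈ A, ∀ b ∈ B, c ≤ K * (edist x a + edist x b)) :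
    c ≤ K * (infEDist x A + infEDist x B) := by
  simp only [infEDist, ENNReal.iInf_add, ENNReal.add_iInf, ENNReal.mul_iInf_of_ne hK₀ hK]
  exact le_iInf₂ fun b hb => le_iInf₂ fun a ha => h a ha b hb

end InfEDist

section Coupling

variable {X : Type*}

@[simp]
lemma setInd_of_mem {S : Set X} {x : X} (h : x ∈ S) : setInd S x = 0 := by
  simp [setInd, h]

lemma mem_of_setInd_ne_top {S : Set X} {x : X} (h : setInd S x ≠ ⊤) : x ∈ S := by
  by_contra hx
  simp [setInd, hx] at h

variable [MetricSpace X] {A B : Set X}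

lemma coupling_of_mem {u v : X} (hu : u ∈ A) (hv : v ∈ B) :
    coupling A B (u, v) = ENNReal.ofReal (dist u v) := by
  simp [coupling, hu, hv]

lemma mem_prod_of_coupling_ne_top {p : X × X} (h : coupling A B p ≠ ⊤) : p ∈ A ×ˢ B := by
  simp only [coupling, ne_eq, ENNReal.add_eq_top, not_or] at h
  exact ⟨mem_of_setInd_ne_top h.1.1, mem_of_setInd_ne_top h.2⟩

lemma dist_add_dist_pos_of_ne {p q : X × X} (h : p ≠ q) : 0 < dist p.1 q.1 + dist p.2 q.2 :=
  (dist_pos.2 h).trans_le (Prod.dist_eq.trans_le (max_le_add_of_nonneg dist_nonneg dist_nonneg))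

lemma ofReal_div_le_couplingNLSlope {x y w : X} (hx : x ∈ A) (hy : y ∈ B) (hw : w ∈ A ∩ B)
    (hxy : x ≠ y) :
    ENNReal.ofReal (dist x y / (dist x w + dist y w)) ≤ couplingNLSlope A B x y := by
  have hne : ((w, w) : X × X) ≠ (x, y) := by
    rintro ⟨⟩
    exact hxy rfl
  refine le_trans ?_ (le_iSup₂ (f := fun p (_ : p ≠ (x, y)) =>
    (coupling A B (x, y) - coupling A B p) / ENNReal.ofReal (dist x p.1 + dist y p.2)) (w, w) hne)
  rw [coupling_of_mem hx hy, coupling_of_mem hw.1 hw.2, dist_self, ENNReal.ofReal_zero, tsub_zero,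
    ENNReal.ofReal_div_of_pos (dist_add_dist_pos_of_ne hne.symm)]

lemma exists_dist_add_lt_of_lt_couplingNLSlope {u v : X} (hu : u ∈ A) (hv : v ∈ B) {κ : ℝ}
    (hκ : 0 ≤ κ) (h : ENNReal.ofReal κ < couplingNLSlope A B u v) :
    ∃ p ∈ A ×ˢ B, dist p.1 p.2 + κ * (dist u p.1 + dist v p.2) < dist u v := by
  simp only [couplingNLSlope, lt_iSup_iff] at h
  obtain ⟨p, hp_ne, hp⟩ := h
  have hD := dist_add_dist_pos_of_ne (Ne.symm hp_ne)
  rw [ENNReal.lt_div_iff_mul_lt (Or.inl (ENNReal.ofReal_pos.2 hD).ne')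
    (Or.inl ENNReal.ofReal_ne_top), coupling_of_mem hu hv] at hp
  have hp_lt : coupling A B p < ENNReal.ofReal (dist u v) :=
    tsub_pos_iff_lt.1 (bot_le.trans_lt hp)
  have hp_mem := mem_prod_of_coupling_ne_top (hp_lt.trans_le le_top).ne
  rw [show p = (p.1, p.2) from rfl, coupling_of_mem hp_mem.1 hp_mem.2,
    ← ENNReal.ofReal_sub _ dist_nonneg, ← ENNReal.ofReal_mul hκ,
    ENNReal.ofReal_lt_ofReal_iff_of_nonneg (by positivity)] at hp
  exact ⟨p, hp_mem, by linarith⟩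

theorem exists_mem_inter_dist_le_of_lt_couplingNLSlope [CompleteSpace X] (hA : IsClosed A)
    (hB : IsClosed B) {κ : ℝ} (hκ : 0 < κ) {x₁ y₁ : X} (hx₁ : x₁ ∈ A) (hy₁ : y₁ ∈ B)
    (H : ∀ u ∈ A, ∀ v ∈ B, u ≠ v → dist x₁ u ≤ dist x₁ y₁ / κ → dist y₁ v ≤ dist x₁ y₁ / κ →
      ENNReal.ofReal κ < couplingNLSlope A B u v) :
    ∃ w ∈ A ∩ B, dist x₁ w ≤ dist x₁ y₁ / κ := by
  have := (hA.prod hB).completeSpace_coe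
  -- Ekeland's principle is used for the max metric on `X × X`, dominated by the sum metric.
  obtain ⟨⟨⟨u, v⟩, hu, hv⟩, hz_desc, hz_min⟩ := Ekeland.exists_forall_lt_add_dist
    (f := fun p : ↥(A ×ˢ B) => dist p.1.1 p.1.2)
    (continuous_subtype_val.fst.dist continuous_subtype_val.snd).lowerSemicontinuous
    ⟨0, by rintro _ ⟨p, rfl⟩; exact dist_nonneg⟩ hκ ⟨(x₁, y₁), hx₁, hy₁⟩
  simp only [Subtype.dist_eq, Prod.dist_eq] at hz_desc hz_min
  have hz_near : max (dist x₁ u) (dist y₁ v) ≤ dist x₁ y₁ / κ := by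
    rw [le_div_iff₀' hκ]
    linarith [dist_nonneg (x := u) (y := v)]
  have hu_near := (le_max_left _ _).trans hz_near
  have hv_near := (le_max_right _ _).trans hz_near
  by_cases huv : u = v
  · exact ⟨u, ⟨hu, huv ▸ hv⟩, hu_near⟩
  obtain ⟨q, hq, hq_lt⟩ := exists_dist_add_lt_of_lt_couplingNLSlope hu hv hκ.le
    (H u hu v hv huv hu_near hv_near)
  have hq_ne : (⟨q, hq⟩ : ↥(A ×ˢ B)) ≠ ⟨(u, v), hu, hv⟩ := by
    rintro ⟨⟩
    simp at hq_lt
  have hmax : max (dist u q.1) (dist v q.2) ≤ dist u q.1 + dist v q.2 :=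
    max_le_add_of_nonneg dist_nonneg dist_nonneg
  linarith [hz_min ⟨q, hq⟩ hq_ne, mul_le_mul_of_nonneg_left hmax hκ.le]

theorem infEDist_inter_le_of_lt_couplingNLSlope [CompleteSpace X] (hA : IsClosed A)
    (hB : IsClosed B) {κ : ℝ} (hκ : 0 < κ) {x : X} {r : ℝ}
    (H : ∀ u ∈ A, ∀ v ∈ B, u ≠ v → dist u x < r + 2 * r / κ → dist v x < r + 2 * r / κ →
      ENNReal.ofReal κ < couplingNLSlope A B u v)
    (hAx : infEDist x A < ENNReal.ofReal r) (hBx : infEDist x B < ENNReal.ofReal r) :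
    infEDist x (A ∩ B) ≤ ENNReal.ofReal (1 + 1 / κ) * (infEDist x A + infEDist x B) := by
  rw [← infEDist_inter_ball_of_lt hAx, ← infEDist_inter_ball_of_lt hBx]
  refine le_mul_infEDist_add_infEDist (by positivity) ENNReal.ofReal_ne_top ?_
  rintro x₁ ⟨hx₁, hx₁r⟩ y₁ ⟨hy₁, hy₁r⟩
  rw [mem_eball, edist_lt_ofReal] at hx₁r hy₁r
  have hx₁y₁ : dist x₁ y₁ < 2 * r := by linarith [dist_triangle_right x₁ y₁ x]
  have hnear {z z₁ : X} (hz₁ : dist z₁ x < r) (hz : dist z₁ z ≤ dist x₁ y₁ / κ) :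
      dist z x < r + 2 * r / κ := by
    have : dist x₁ y₁ / κ < 2 * r / κ := div_lt_div_of_pos_right hx₁y₁ hκ
    linarith [dist_triangle_left z x z₁]
  obtain ⟨w, hw, hx₁w⟩ := exists_mem_inter_dist_le_of_lt_couplingNLSlope hA hB hκ hx₁ hy₁
    fun u hu v hv huv hu' hv' => H u hu v hv huv (hnear hx₁r hu') (hnear hy₁r hv')
  have hxw : dist x w ≤ (1 + 1 / κ) * (dist x x₁ + dist x y₁) := calc
    dist x w ≤ dist x x₁ + dist x₁ y₁ / κ := (dist_triangle x x₁ w).trans (by gcongr)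
    _ ≤ dist x x₁ + (dist x x₁ + dist x y₁) / κ := by gcongr; exact dist_triangle_left x₁ y₁ x
    _ ≤ (1 + 1 / κ) * (dist x x₁ + dist x y₁) := by
      rw [add_mul, one_mul, one_div_mul_eq_div]
      linarith [dist_nonneg (x := x) (y := y₁)]
  calc infEDist x (A ∩ B) ≤ edist x w := infEDist_le_edist_of_mem hw
    _ ≤ ENNReal.ofReal ((1 + 1 / κ) * (dist x x₁ + dist x y₁)) := by
      rw [edist_dist]; exact ENNReal.ofReal_le_ofReal hxw
    _ = ENNReal.ofReal (1 + 1 / κ) * (edist x x₁ + edist x y₁) := by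
      rw [ENNReal.ofReal_mul (by positivity), ENNReal.ofReal_add dist_nonneg dist_nonneg,
        edist_dist, edist_dist]

end Coupling

section Translates

variable {X : Type*} [NormedAddCommGroup X]

def UniformlyPositiveCouplingSlope (A B : Set X) (xbar : X) : Prop :=
  ∃ δ > 0, ∃ κ > 0, ∀ a b : X, ‖a‖ ≤ δ → ‖b‖ ≤ δ →
    ∀ x ∈ ((· - a) '' A) ∩ Metric.ball xbar δ,
      ∀ y ∈ ((· - b) '' B) ∩ Metric.ball xbar δ, x ≠ y →
        ENNReal.ofReal κ ≤ couplingNLSlope ((· - a) '' A) ((· - b) '' B) x y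

theorem Transversal.uniformlyPositiveCouplingSlope {A B : Set X} {xbar : X}
    (h : Transversal A B xbar) : UniformlyPositiveCouplingSlope A B xbar := by
  obtain ⟨K, hK, δ, hδ, hTr⟩ := h
  refine ⟨δ / 2, half_pos hδ, 1 / (2 * K + 3), by positivity, ?_⟩
  rintro a b ha hb x ⟨hxA, hx⟩ y ⟨hyB, -⟩ hxy
  set A' := (· - a) '' A
  set B' := (· - b) '' B
  have hxy_pos : 0 < dist x y := dist_pos.2 hxy
  have hball {c : X} (hc : ‖c‖ ≤ δ / 2) : c ∈ ball (0 : X) δ := mem_ball_zero_iff.2 (by linarith)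
  have hinter : infEDist x (A' ∩ B') < ENNReal.ofReal ((K + 1) * dist x y) := calc
    infEDist x (A' ∩ B') ≤ ENNReal.ofReal K * (infEDist x A' + infEDist x B') :=
      hTr a (hball ha) b (hball hb) x (ball_subset_ball (by linarith) hx)
    _ ≤ ENNReal.ofReal K * ENNReal.ofReal (dist x y) := by
      rw [infEDist_zero_of_mem hxA, zero_add, ← edist_dist]
      gcongr
      exact infEDist_le_edist_of_mem hyB
    _ < ENNReal.ofReal ((K + 1) * dist x y) := by
      rw [← ENNReal.ofReal_mul hK.le, ENNReal.ofReal_lt_ofReal_iff (by positivity)]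
      nlinarith
  obtain ⟨w, hw, hxw⟩ := infEDist_lt_iff.1 hinter
  rw [edist_dist, ENNReal.ofReal_lt_ofReal_iff_of_nonneg dist_nonneg] at hxw
  refine le_trans (ENNReal.ofReal_le_ofReal ?_) (ofReal_div_le_couplingNLSlope hxA hyB hw hxy)
  rw [div_le_div_iff₀ (by positivity) (hxy_pos.trans_le (dist_triangle_right x y w))]
  linarith [dist_triangle_left y w x]

lemma isClosed_image_sub_const {A : Set X} (hA : IsClosed A) (a : X) : IsClosed ((· - a) '' A) :=
  (Homeomorph.subRight a).isClosedMap A hA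

theorem UniformlyPositiveCouplingSlope.transversal [CompleteSpace X] {A B : Set X}
    (hA : IsClosed A) (hB : IsClosed B) {xbar : X} (hx : xbar ∈ A ∩ B)
    (h : UniformlyPositiveCouplingSlope A B xbar) : Transversal A B xbar := by
  obtain ⟨δ, hδ, κ, hκ, hslope⟩ := h
  have hκ' : 0 < κ / 2 := half_pos hκ
  -- For `x ∈ ball xbar δ₀`, this puts `ball x (2δ₀ (1 + 2 / (κ / 2)))` inside `ball xbar δ`.
  set δ₀ := δ / (3 + 4 / (κ / 2))
  have hδ₀ : 0 < δ₀ := by positivity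
  have hδ₀δ : δ₀ * (3 + 4 / (κ / 2)) = δ := div_mul_cancel₀ δ (by positivity)
  refine ⟨1 + 1 / (κ / 2), by positivity, δ₀, hδ₀, fun a ha b hb x hxδ₀ => ?_⟩
  rw [mem_ball_zero_iff] at ha hb
  rw [mem_ball] at hxδ₀
  have hδ₀_le : δ₀ ≤ δ := by nlinarith [(by positivity : 0 ≤ 4 / (κ / 2))]
  have hnear {c : X} (hc : ‖c‖ < δ₀) {S : Set X} (hS : xbar ∈ S) :
      infEDist x ((· - c) '' S) < ENNReal.ofReal (2 * δ₀) := by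
    refine (infEDist_le_edist_of_mem (mem_image_of_mem _ hS)).trans_lt ?_
    rw [edist_dist, ENNReal.ofReal_lt_ofReal_iff (by positivity)]
    have : dist xbar (xbar - c) = ‖c‖ := by rw [dist_eq_norm, sub_sub_cancel]
    linarith [dist_triangle x xbar (xbar - c)]
  refine infEDist_inter_le_of_lt_couplingNLSlope (isClosed_image_sub_const hA a)
    (isClosed_image_sub_const hB b) hκ' ?_ (hnear ha hx.1) (hnear hb hx.2)
  intro u hu v hv huv hux hvx
  have hball {z : X} (hz : dist z x < 2 * δ₀ + 2 * (2 * δ₀) / (κ / 2)) : z ∈ ball xbar δ := by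
    rw [mem_ball]
    have : 2 * δ₀ + 2 * (2 * δ₀) / (κ / 2) + δ₀ = δ₀ * (3 + 4 / (κ / 2)) := by ring
    linarith [dist_triangle z x xbar]
  exact (ENNReal.ofReal_lt_ofReal_iff hκ).2 (half_lt_self hκ) |>.trans_le
    (hslope a b (ha.le.trans hδ₀_le) (hb.le.trans hδ₀_le) u ⟨hu, hball hux⟩ v ⟨hv, hball hvx⟩ huv)

end Translates

theorem stmt9_general {X : Type*} [NormedAddCommGroup X] [CompleteSpace X]
    {A B : Set X} (hA : IsClosed A) (hB : IsClosed B) {xbar : X} (hx : xbar ∈ A ∩ B) :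
    Transversal A B xbar ↔
      ∃ δ > 0, ∃ κ > 0, ∀ a b : X, ‖a‖ ≤ δ → ‖b‖ ≤ δ →
        ∀ x ∈ ((· - a) '' A) ∩ Metric.ball xbar δ,
          ∀ y ∈ ((· - b) '' B) ∩ Metric.ball xbar δ, x ≠ y →
            ENNReal.ofReal κ ≤ couplingNLSlope ((· - a) '' A) ((· - b) '' B) x y :=
  ⟨Transversal.uniformlyPositiveCouplingSlope,
    UniformlyPositiveCouplingSlope.transversal hA hB hx⟩

theorem stmt9 {X : Type*} [NormedAddCommGroup X] [NormedSpace ℝ X] [CompleteSpace X]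
    {A B : Set X} (hA : IsClosed A) (hB : IsClosed B) {xbar : X} (hx : xbar ∈ A ∩ B) :
    Transversal A B xbar ↔
      ∃ δ > 0, ∃ κ > 0, ∀ a b : X, ‖a‖ ≤ δ → ‖b‖ ≤ δ →
        ∀ x ∈ ((· - a) '' A) ∩ Metric.ball xbar δ,
          ∀ y ∈ ((· - b) '' B) ∩ Metric.ball xbar δ, x ≠ y →
            ENNReal.ofReal κ ≤ couplingNLSlope ((· - a) '' A) ((· - b) '' B) x y :=
  stmt9_general hA hB hx
end
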